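/- arXiv:2107.10608 — 5 statements merged into one kernel-verified Lean document; each statement's English description precedes it below -/
import Mathlib

section
/- Every minor of the infinite Hankel matrix H = (W_{i+j}(q))_{i,j ≥ 0} of type B Narayana polynomials is a polynomial in q with nonnegative coefficients. Precisely: for every k ≥ 1 and all strictly increasing sequences of indices 0 ≤ i_1 < i_2 < ... < i_k and 0 ≤ j_1 < j_2 < ... < j_k, the determinant of the k × k matrix whose (s,t) entry is W_{i_s + j_t}(q) has all coefficients nonnegative. -/
/-!
Put `M i u = ∑ₐ C(i,a) C(i,a+u) qᵃ`, `d 0 = 1`, `d u = 2 qᵘ` for `u > 0`, and let `J` be the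
tridiagonal matrix with diagonal `1 + q`, superdiagonal `1` and subdiagonal `2q, q, q, …`.
Pascal's rule gives `M (i+1) = M i · J`, and `d u J v u = d v J u v`, so moving one factor `J`
from one side to the other gives `W (i+j) = ∑ᵤ M i u · d u · M j u`, i.e. `H = M D Mᵀ`.
By Cauchy–Binet it is enough for `M` to be `q`-totally positive, and since `M` is built row by row
from its first row `e₀` by multiplying with `J`, it is enough for `J` to be. A minor of a
tridiagonal matrix splits along zero blocks into contiguous principal minors and single entries,
and the contiguous principal minors of `J` are `1 + qⁿ` and `1 + q + ⋯ + qⁿ`.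
-/

open Polynomial

/-- The `n`-th Narayana polynomial of type `B`:
`W_n(q) = ∑_{k=0}^{n} binom(n,k)^2 q^k`. -/
noncomputable def narayanaB (n : ℕ) : Polynomial ℝ :=
  ∑ k ∈ Finset.range (n + 1), ((Nat.choose n k : Polynomial ℝ)) ^ 2 * Polynomial.X ^ k

open Finset Matrix

section NonnegCoeffs

variable (R : Type*) [Semiring R] [PartialOrder R] [IsOrderedRing R]

def Polynomial.nonnegCoeffs : Subsemiring R[X] where
  carrier := {p | ∀ n, 0 ≤ p.coeff n}
  zero_mem' n := by simp
  one_mem' n := by rw [coeff_one]; split_ifs <;> simp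
  add_mem' hp hq n := by rw [coeff_add]; exact add_nonneg (hp n) (hq n)
  mul_mem' hp hq n := by
    rw [coeff_mul]; exact sum_nonneg fun x _ => mul_nonneg (hp x.1) (hq x.2)

variable {R}

theorem Polynomial.X_mem_nonnegCoeffs : (X : R[X]) ∈ nonnegCoeffs R := fun n => by
  rw [coeff_X]; split_ifs <;> simp

end NonnegCoeffs

section CauchyBinet

variable {α M : Type*} [Fintype α] [LinearOrder α] [AddCommMonoid M] {k : ℕ}

theorem Finset.sum_injective_eq_sum_strictMono_perm (F : (Fin k → α) → M) :
    ∑ p : Fin k → α with p.Injective, F p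
      = ∑ g : Fin k → α with StrictMono g, ∑ σ : Equiv.Perm (Fin k), F (g ∘ σ) := by
  rw [← sum_product']
  symm
  refine sum_bij (fun gσ _ => gσ.1 ∘ gσ.2) ?_ ?_ ?_ (fun _ _ => rfl)
  · intro gσ h
    simp only [mem_product, mem_filter, mem_univ, true_and, and_true] at h ⊢
    exact h.injective.comp gσ.2.injective
  · rintro ⟨g, σ⟩ hg ⟨g', σ'⟩ hg' h
    simp only [mem_product, mem_filter, mem_univ, true_and, and_true] at hg hg' h
    have hgg : g = g' := (hg.range_inj hg').1 <| by
      rw [← σ.surjective.range_comp, h, σ'.surjective.range_comp]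
    subst hgg
    exact Prod.ext rfl (Equiv.ext fun x => hg.injective (congrFun h x))
  · intro p hp
    simp only [mem_filter, mem_univ, true_and] at hp
    refine ⟨(p ∘ Tuple.sort p, (Tuple.sort p)⁻¹), ?_, ?_⟩
    · simpa using (Tuple.monotone_sort p).strictMono_of_injective
        (hp.comp (Tuple.sort p).injective)
    · ext x; simp

variable {R : Type*} [CommRing R] {ι : Type*} [Fintype ι] [LinearOrder ι]

theorem Matrix.det_mul_eq_sum_strictMono (A : Matrix (Fin k) ι R) (B : Matrix ι (Fin k) R) :
    (A * B).det = ∑ g : Fin k → ι with StrictMono g,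
      (A.submatrix id g).det * (B.submatrix g id).det := by
  have hexpand :
      (A * B).det = ∑ p : Fin k → ι, (∏ t, B (p t) t) * (A.submatrix id p).det := by
    have hrows : (A * B)ᵀ = fun t => ∑ u, B u t • Aᵀ u := by
      ext t i; simp [mul_apply, mul_comm]
    let δ := (detRowAlternating : (Fin k → R) [⋀^Fin k]→ₗ[R] R).toMultilinearMap
    rw [← det_transpose, hrows]
    refine (δ.map_sum fun t u => B u t • Aᵀ u).trans (sum_congr rfl fun p _ => ?_)
    rw [← det_transpose (A.submatrix id p)]
    exact δ.map_smul_univ _ _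
  have hvanish : ∀ p : Fin k → ι, ¬ p.Injective → (A.submatrix id p).det = 0 := by
    intro p hp
    obtain ⟨s, t, hst, hne⟩ : ∃ s t, p s = p t ∧ s ≠ t := by
      simpa [Function.Injective] using hp
    exact det_zero_of_column_eq hne fun i => by simp [hst]
  classical
  rw [hexpand, ← sum_filter_of_ne (p := Function.Injective) fun p _ h => by
      by_contra hp; exact h (by rw [hvanish p hp, mul_zero]),
    sum_injective_eq_sum_strictMono_perm]
  refine sum_congr rfl fun g _ => ?_
  have hperm : ∀ σ : Equiv.Perm (Fin k),
      A.submatrix id (g ∘ σ) = (A.submatrix id g).submatrix id σ := fun σ => rfl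
  simp_rw [hperm, det_permute', det_apply' (B.submatrix g id)]
  simp only [Finset.mul_sum]
  refine sum_congr rfl fun σ _ => ?_
  simp only [submatrix_apply, id, Function.comp_apply]
  ring

end CauchyBinet

theorem Fin.apply_eq_apply_zero_add {k : ℕ} {f : Fin (k + 1) → ℕ}
    (h : ∀ q : Fin k, f q.succ = f q.castSucc + 1) (s : Fin (k + 1)) : f s = f 0 + s := by
  induction s using Fin.induction with
  | zero => simp
  | succ q ih => rw [h, ih, Fin.val_succ, Fin.val_castSucc, add_assoc]

namespace Matrix

variable {R : Type*} [CommRing R] {S : Subsemiring R}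

/-- For `S = nonnegCoeffs ℝ` this is `q`-total positivity. -/
def IsTotallyPositive {m n : Type*} [LinearOrder m] [LinearOrder n] (S : Subsemiring R)
    (A : Matrix m n R) : Prop :=
  ∀ (k : ℕ) (r : Fin k → m) (c : Fin k → n), StrictMono r → StrictMono c →
    (A.submatrix r c).det ∈ S

section TotallyPositive

variable {l m n o : Type*} [LinearOrder l] [LinearOrder m] [LinearOrder n] [LinearOrder o]

theorem IsTotallyPositive.transpose {A : Matrix m n R} (hA : A.IsTotallyPositive S) :
    Aᵀ.IsTotallyPositive S := fun k r c hr hc => by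
  rw [← transpose_submatrix, det_transpose]
  exact hA k c r hc hr

theorem IsTotallyPositive.submatrix {A : Matrix m n R} (hA : A.IsTotallyPositive S)
    {f : l → m} {g : o → n} (hf : StrictMono f) (hg : StrictMono g) :
    (A.submatrix f g).IsTotallyPositive S := fun k r c hr hc =>
  hA k (f ∘ r) (g ∘ c) (hf.comp hr) (hg.comp hc)

theorem IsTotallyPositive.scale_columns {A : Matrix m n R} (hA : A.IsTotallyPositive S)
    {d : n → R} (hd : ∀ j, d j ∈ S) : (of fun i j => A i j * d j).IsTotallyPositive S :=
  fun k r c hr hc => by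
  have : (of fun i j => A i j * d j).submatrix r c = of fun s t => d (c t) * A.submatrix r c s t :=
    ext fun _ _ => mul_comm _ _
  rw [this, det_mul_row]
  exact mul_mem (prod_mem fun t _ => hd (c t)) (hA k r c hr hc)

theorem IsTotallyPositive.mul [Fintype n] {A : Matrix m n R} {B : Matrix n o R}
    (hA : A.IsTotallyPositive S) (hB : B.IsTotallyPositive S) :
    (A * B).IsTotallyPositive S := fun k r c hr hc => by
  rw [submatrix_mul A B r id c Function.bijective_id, det_mul_eq_sum_strictMono]
  exact sum_mem fun g hg =>
    mul_mem (hA k r g hr (mem_filter.1 hg).2) (hB k g c (mem_filter.1 hg).2 hc)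

theorem isTotallyPositive_of_forall_rows_lt {A : Matrix ℕ n R}
    (hA : ∀ N, (A.submatrix (Fin.val : Fin N → ℕ) id).IsTotallyPositive S) :
    A.IsTotallyPositive S := fun k r c hr hc => by
  have hlt : ∀ s, r s < ∑ t, r t + 1 := fun s =>
    Nat.lt_succ_of_le (single_le_sum (fun _ _ => Nat.zero_le _) (mem_univ s))
  exact hA _ k (fun s => ⟨r s, hlt s⟩) c (fun _ _ h => hr h) hc

theorem det_eq_det_submatrix_succ_of_row_zero_eq_single {k : ℕ}
    (M : Matrix (Fin (k + 1)) (Fin (k + 1)) R) (h : M 0 = Pi.single 0 1) :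
    M.det = (M.submatrix Fin.succ Fin.succ).det := by
  rw [det_succ_row_zero, Fin.sum_univ_succ, h]
  simp

theorem isTotallyPositive_of_row_zero_eq_single {N : ℕ} {A : Matrix (Fin (N + 1)) ℕ R}
    (h0 : A 0 = Pi.single 0 1) (hA : (A.submatrix Fin.succ id).IsTotallyPositive S) :
    A.IsTotallyPositive S := by
  have hshift : ∀ {k} (r : Fin k → Fin (N + 1)) (c : Fin k → ℕ), StrictMono r →
      StrictMono c → (∀ s, r s ≠ 0) → (A.submatrix r c).det ∈ S := fun r c hr hc hne => by
    have : A.submatrix r c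
        = (A.submatrix Fin.succ id).submatrix (fun s => (r s).pred (hne s)) c := by
      ext; simp
    rw [this]
    exact hA _ _ c (fun s t hst => by simpa using hr hst) hc
  intro k r c hr hc
  rcases k with _ | k
  · simp [one_mem]
  by_cases hr0 : r 0 = 0
  · have hr' : ∀ s, r (Fin.succ s) ≠ 0 := fun s => ne_of_gt (hr0 ▸ hr (Fin.succ_pos s))
    by_cases hc0 : c 0 = 0
    · rw [det_eq_det_submatrix_succ_of_row_zero_eq_single]
      · exact hshift _ _ (hr.comp Fin.strictMono_succ) (hc.comp Fin.strictMono_succ) hr'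
      · ext t
        simp [hr0, h0, Pi.single_apply, ← hc0, hc.injective.eq_iff]
    · rw [det_eq_zero_of_row_eq_zero 0 fun t => ?_]
      · exact zero_mem S
      have : c t ≠ 0 := by have := hc.monotone (Fin.zero_le t); omega
      simp [hr0, h0, this]
  · exact hshift r c hr hc fun s h =>
      hr0 (nonpos_iff_eq_zero.1 (h ▸ hr.monotone (Fin.zero_le s)))

theorem isTotallyPositive_of_row_succ_eq_sum {O T : Matrix ℕ ℕ R} (hT : T.IsTotallyPositive S)
    (h0 : O 0 = Pi.single 0 1) (htri : ∀ i u, i < u → O i u = 0)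
    (hsucc : ∀ i v, O (i + 1) v = ∑ u ∈ range (i + 1), O i u * T u v) :
    O.IsTotallyPositive S := by
  refine isTotallyPositive_of_forall_rows_lt fun N => ?_
  induction N with
  | zero =>
    intro k r c _ _
    rcases k with _ | k
    · simp [one_mem]
    · exact (r 0).elim0
  | succ N ih =>
    refine isTotallyPositive_of_row_zero_eq_single h0 ?_
    have hprod : (O.submatrix (Fin.val : Fin (N + 1) → ℕ) id).submatrix Fin.succ id
        = (O.submatrix Fin.val id).submatrix id (Fin.val : Fin N → ℕ)
          * T.submatrix Fin.val id := by
      ext s v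
      change O (s + 1) v = ∑ u : Fin N, O s u * T u v
      rw [hsucc, Fin.sum_univ_eq_sum_range (fun u => O s u * T u v)]
      exact (eventually_constant_sum (fun u hu => by rw [htri s u hu, zero_mul]) s.isLt).symm
    rw [hprod]
    exact (ih.submatrix strictMono_id Fin.val_strictMono).mul
      (hT.submatrix Fin.val_strictMono strictMono_id)

end TotallyPositive

theorem det_eq_mul_of_lower_left_eq_zero {k m n : ℕ} (M : Matrix (Fin k) (Fin k) R)
    (hk : m + n = k)
    (h : ∀ s t, M (Fin.cast hk (Fin.natAdd m s)) (Fin.cast hk (Fin.castAdd n t)) = 0) :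
    M.det = (M.submatrix (Fin.cast hk ∘ Fin.castAdd n) (Fin.cast hk ∘ Fin.castAdd n)).det
      * (M.submatrix (Fin.cast hk ∘ Fin.natAdd m) (Fin.cast hk ∘ Fin.natAdd m)).det := by
  subst hk
  rw [← det_submatrix_equiv_self finSumFinEquiv M, ← fromBlocks_toBlocks (M.submatrix _ _),
    show toBlocks₂₁ (M.submatrix finSumFinEquiv finSumFinEquiv) = 0 from ext fun s t => by
      simpa [toBlocks₂₁] using h s t,
    det_fromBlocks_zero₂₁]
  rfl

section Tridiagonal

def IsTridiagonal {α : Type*} [Zero α] (T : Matrix ℕ ℕ α) : Prop :=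
  ∀ u v, u + 1 < v ∨ v + 1 < u → T u v = 0

def principalBlock {α : Type*} (T : Matrix ℕ ℕ α) (a n : ℕ) : Matrix (Fin n) (Fin n) α :=
  T.submatrix (a + ·) (a + ·)

theorem IsTridiagonal.transpose {α : Type*} [Zero α] {T : Matrix ℕ ℕ α}
    (hT : T.IsTridiagonal) : Tᵀ.IsTridiagonal :=
  fun u v h => hT v u h.symm

variable {T : Matrix ℕ ℕ R}

theorem IsTridiagonal.det_submatrix_mem_of_gap (hT : T.IsTridiagonal) {k : ℕ}
    (ih : ∀ m < k + 1, ∀ r c : Fin m → ℕ, StrictMono r → StrictMono c →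
      (T.submatrix r c).det ∈ S)
    {r c : Fin (k + 1) → ℕ} (hr : StrictMono r) (hc : StrictMono c) (q : Fin k)
    (hgap : c q.castSucc + 1 < r q.succ) : (T.submatrix r c).det ∈ S := by
  have hk : (q + 1) + (k - q) = k + 1 := by omega
  have hcast : StrictMono (Fin.cast hk) := fun _ _ h => h
  have hzero : ∀ s t,
      T.submatrix r c (Fin.cast hk (Fin.natAdd _ s)) (Fin.cast hk (Fin.castAdd _ t)) = 0 := by
    intro s t
    have h1 := hc.monotone (show Fin.cast hk (Fin.castAdd _ t) ≤ q.castSucc from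
      Fin.le_def.2 (by simp; omega))
    have h2 := hr.monotone (show q.succ ≤ Fin.cast hk (Fin.natAdd _ s) from
      Fin.le_def.2 (by simp))
    exact hT _ _ (Or.inr (by omega))
  rw [det_eq_mul_of_lower_left_eq_zero _ hk hzero]
  exact mul_mem
    (ih _ (by omega) _ _ (hr.comp (hcast.comp (Fin.strictMono_castAdd _)))
      (hc.comp (hcast.comp (Fin.strictMono_castAdd _))))
    (ih _ (by omega) _ _ (hr.comp (hcast.comp (Fin.strictMono_natAdd _)))
      (hc.comp (hcast.comp (Fin.strictMono_natAdd _))))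

theorem IsTridiagonal.isTotallyPositive (hT : T.IsTridiagonal) (hentry : ∀ u v, T u v ∈ S)
    (hblock : ∀ a n, (T.principalBlock a n).det ∈ S) : T.IsTotallyPositive S := by
  intro k
  induction k using Nat.strong_induction_on generalizing T with
  | _ k ih =>
  intro r c hr hc
  rcases k with _ | _ | k
  · simp [one_mem]
  · rw [det_fin_one]
    exact hentry _ _
  by_cases gap : ∃ q : Fin (k + 1), c q.castSucc + 1 < r q.succ
  · obtain ⟨q, hgap⟩ := gap
    exact hT.det_submatrix_mem_of_gap (fun m hm => ih m hm hT hentry hblock) hr hc q hgap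
  by_cases gap' : ∃ q : Fin (k + 1), r q.castSucc + 1 < c q.succ
  · obtain ⟨q, hgap⟩ := gap'
    rw [← det_transpose, transpose_submatrix]
    refine hT.transpose.det_submatrix_mem_of_gap (fun m hm => ih m hm hT.transpose
      (fun u v => hentry v u) fun a n => ?_) hc hr q hgap
    rw [principalBlock, ← transpose_submatrix, det_transpose]
    exact hblock a n
  push Not at gap gap'
  -- Without a gap, rows and columns both advance by exactly one and start together.
  have step : ∀ q : Fin (k + 1), r q.succ = r q.castSucc + 1 ∧ c q.succ = c q.castSucc + 1
      ∧ r q.castSucc = c q.castSucc := fun q => by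
    have := gap q; have := gap' q
    have := hr q.castSucc_lt_succ; have := hc q.castSucc_lt_succ
    omega
  have hc0 : c 0 = r 0 := by simpa using ((step 0).2.2).symm
  have hblk : T.submatrix r c = T.principalBlock (r 0) (k + 2) := by
    ext s t
    rw [submatrix_apply, Fin.apply_eq_apply_zero_add (fun q => (step q).1) s,
      Fin.apply_eq_apply_zero_add (fun q => (step q).2.1) t, hc0]
    rfl
  rw [hblk]
  exact hblock _ _

theorem IsTridiagonal.det_principalBlock_succ_succ (hT : T.IsTridiagonal) (a n : ℕ) :
    (T.principalBlock a (n + 2)).det = T a a * (T.principalBlock (a + 1) (n + 1)).det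
      - T a (a + 1) * T (a + 1) a * (T.principalBlock (a + 2) n).det := by
  have hfirst : (T.principalBlock a (n + 2)).submatrix Fin.succ (Fin.succAbove 0)
      = T.principalBlock (a + 1) (n + 1) := by
    ext s t
    simp [principalBlock]
    ring_nf
  have hsecond : ((T.principalBlock a (n + 2)).submatrix Fin.succ (Fin.succ 0).succAbove).det
      = T (a + 1) a * (T.principalBlock (a + 2) n).det := by
    have hminor : ((T.principalBlock a (n + 2)).submatrix Fin.succ (Fin.succ 0).succAbove).submatrix
        (Fin.succAbove 0) Fin.succ = T.principalBlock (a + 2) n := by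
      ext s t
      simp [principalBlock]
      ring_nf
    rw [det_succ_column_zero, Fin.sum_univ_succ, sum_eq_zero fun i _ => by
      rw [submatrix_apply, principalBlock, submatrix_apply, hT _ _ (Or.inr (by simp))]; ring,
      hminor]
    simp [principalBlock]
  rw [det_succ_row_zero, Fin.sum_univ_succ, Fin.sum_univ_succ,
    sum_eq_zero fun j _ => by rw [principalBlock, submatrix_apply, hT _ _ (Or.inl (by simp))]; ring,
    hfirst, hsecond]
  simp [principalBlock]
  ring

end Tridiagonal

end Matrix
namespace narayanaB

noncomputable def jacobi : Matrix ℕ ℕ ℝ[X] := of fun u v =>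
  if u + 1 = v then 1 else if u = v then 1 + X else if u = v + 1 then (if v = 0 then 2 * X else X)
  else 0

noncomputable def triangle : Matrix ℕ ℕ ℝ[X] := of fun i u =>
  ∑ a ∈ range (i + 1), C ((i.choose a * i.choose (a + u) : ℕ) : ℝ) * X ^ a

noncomputable def weight (u : ℕ) : ℝ[X] := if u = 0 then 1 else 2 * X ^ u

theorem jacobi_self (u : ℕ) : jacobi u u = 1 + X := by simp [jacobi]

theorem jacobi_succ_right (u : ℕ) : jacobi u (u + 1) = 1 := by simp [jacobi]

theorem jacobi_one_zero : jacobi 1 0 = 2 * X := by simp [jacobi]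

theorem jacobi_succ_left {v : ℕ} (hv : v ≠ 0) : jacobi (v + 1) v = X := by
  simp [jacobi, hv, show v + 1 + 1 ≠ v by omega]

theorem jacobi_mem_nonnegCoeffs (u v : ℕ) : jacobi u v ∈ nonnegCoeffs ℝ := by
  have hX := X_mem_nonnegCoeffs (R := ℝ)
  simp only [jacobi, of_apply]
  split_ifs
  all_goals first
    | exact one_mem _ | exact zero_mem _ | exact hX
    | exact add_mem (one_mem _) hX | exact mul_mem (ofNat_mem _ 2) hX

theorem isTridiagonal_jacobi : jacobi.IsTridiagonal := fun u v h => by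
  simp only [jacobi, of_apply]
  split_ifs <;> first | rfl | omega

theorem det_principalBlock_jacobi_succ (a n : ℕ) :
    (jacobi.principalBlock (a + 1) n).det = ∑ j ∈ range (n + 1), X ^ j := by
  induction n using Nat.strong_induction_on generalizing a with
  | _ n ih =>
  rcases n with _ | _ | n
  · simp
  · simp [principalBlock, jacobi_self, geom_sum_succ']
    ring
  · rw [isTridiagonal_jacobi.det_principalBlock_succ_succ, ih _ (by omega), ih _ (by omega),
      jacobi_self, jacobi_succ_right, jacobi_succ_left (by omega)]
    linear_combination geom_sum_succ (x := (X : ℝ[X])) (n := n + 1)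
      - geom_sum_succ (x := (X : ℝ[X])) (n := n + 2)

theorem det_principalBlock_jacobi_zero (n : ℕ) :
    (jacobi.principalBlock 0 (n + 1)).det = 1 + X ^ (n + 1) := by
  rcases n with _ | n
  · simp [principalBlock, jacobi_self]
  · rw [isTridiagonal_jacobi.det_principalBlock_succ_succ, det_principalBlock_jacobi_succ,
      det_principalBlock_jacobi_succ, jacobi_self, jacobi_succ_right, jacobi_one_zero]
    linear_combination geom_sum_succ (x := (X : ℝ[X])) (n := n + 1)
      + X * geom_sum_succ' (x := (X : ℝ[X])) (n := n + 1)

theorem isTotallyPositive_jacobi : jacobi.IsTotallyPositive (nonnegCoeffs ℝ) := by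
  refine isTridiagonal_jacobi.isTotallyPositive jacobi_mem_nonnegCoeffs fun a n => ?_
  rcases a with _ | a
  · rcases n with _ | n
    · simp [one_mem]
    · rw [det_principalBlock_jacobi_zero]
      exact add_mem (one_mem _) (pow_mem X_mem_nonnegCoeffs _)
  · rw [det_principalBlock_jacobi_succ]
    exact sum_mem fun j _ => pow_mem X_mem_nonnegCoeffs j

theorem coeff_triangle (i u a : ℕ) :
    (triangle i u).coeff a = (i.choose a * i.choose (a + u) : ℕ) := by
  simp only [triangle, of_apply, finsetSum_coeff, coeff_C_mul_X_pow, sum_ite_eq, mem_range]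
  split_ifs with h
  · rfl
  · rw [Nat.choose_eq_zero_of_lt (by omega), zero_mul, Nat.cast_zero]

theorem triangle_eq_zero {i u : ℕ} (h : i < u) : triangle i u = 0 := by
  ext a
  rw [coeff_triangle, Nat.choose_eq_zero_of_lt (by omega : i < a + u)]
  simp

theorem triangle_zero : triangle 0 = Pi.single 0 1 := by
  funext u
  ext a
  rcases a with _ | a <;> rcases u with _ | u <;> simp [coeff_triangle, coeff_one]

theorem triangle_succ_zero (i : ℕ) :
    triangle (i + 1) 0 = triangle i 0 + X * (triangle i 0 + 2 * triangle i 1) := by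
  ext a
  rcases a with _ | a
  · simp [coeff_triangle]
  · simp [coeff_triangle, coeff_X_mul, Nat.choose_succ_succ']
    ring

theorem triangle_succ_succ (i v : ℕ) :
    triangle (i + 1) (v + 1)
      = triangle i v + triangle i (v + 1) + X * (triangle i (v + 1) + triangle i (v + 2)) := by
  ext a
  rcases a with _ | a
  · simp [coeff_triangle, Nat.choose_succ_succ']
  · rw [coeff_triangle, show a + 1 + (v + 1) = a + v + 1 + 1 by ring]
    simp [coeff_triangle, coeff_X_mul, Nat.choose_succ_succ']
    ring_nf

theorem sum_mul_jacobi_zero (f : ℕ → ℝ[X]) {N : ℕ} (hN : 2 ≤ N) :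
    ∑ u ∈ range N, f u * jacobi u 0 = (1 + X) * f 0 + 2 * X * f 1 := by
  rw [eventually_constant_sum
    (fun u hu => by rw [isTridiagonal_jacobi u 0 (by omega), mul_zero]) hN]
  simp [sum_range_succ, jacobi]
  ring

theorem sum_mul_jacobi_succ (f : ℕ → ℝ[X]) {v N : ℕ} (hN : v + 3 ≤ N) :
    ∑ u ∈ range N, f u * jacobi u (v + 1) = f v + (1 + X) * f (v + 1) + X * f (v + 2) := by
  rw [eventually_constant_sum
      (fun u hu => by rw [isTridiagonal_jacobi u _ (by omega), mul_zero]) hN,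
    sum_range_succ, sum_range_succ, sum_range_succ,
    sum_eq_zero fun u hu => by rw [isTridiagonal_jacobi u _ (by simp at hu; omega), mul_zero]]
  simp [jacobi]
  ring

theorem triangle_succ (i v : ℕ) {N : ℕ} (hN : i < N) :
    triangle (i + 1) v = ∑ u ∈ range N, triangle i u * jacobi u v := by
  have hvanish : ∀ u ≥ N, triangle i u * jacobi u v = 0 := fun u hu => by
    rw [triangle_eq_zero (by omega), zero_mul]
  rw [← eventually_constant_sum hvanish (show N ≤ N + v + 3 by omega)]
  rcases v with _ | v
  · rw [sum_mul_jacobi_zero _ (by omega), triangle_succ_zero]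
    ring
  · rw [sum_mul_jacobi_succ _ (by omega), triangle_succ_succ]
    ring

theorem isTotallyPositive_triangle : triangle.IsTotallyPositive (nonnegCoeffs ℝ) :=
  isTotallyPositive_of_row_succ_eq_sum isTotallyPositive_jacobi triangle_zero
    (fun _ _ h => triangle_eq_zero h) fun i v => triangle_succ i v (Nat.lt_succ_self i)

theorem weight_mem_nonnegCoeffs (u : ℕ) : weight u ∈ nonnegCoeffs ℝ := by
  unfold weight
  split_ifs
  · exact one_mem _
  · exact mul_mem (ofNat_mem _ 2) (pow_mem X_mem_nonnegCoeffs u)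

theorem weight_mul_jacobi (u v : ℕ) : weight u * jacobi v u = weight v * jacobi u v := by
  simp only [weight, jacobi, of_apply]
  split_ifs <;> first | omega | (subst_vars; ring)

theorem narayanaB_eq_triangle (n : ℕ) : narayanaB n = triangle n 0 := by
  simp only [narayanaB, triangle, of_apply, add_zero]
  refine sum_congr rfl fun k _ => ?_
  simp [sq]

theorem narayanaB_add_eq_sum (i j : ℕ) {N : ℕ} (hN : i < N) :
    narayanaB (i + j) = ∑ u ∈ range N, triangle i u * weight u * triangle j u := by
  induction i generalizing j N with
  | zero =>
    rw [zero_add, narayanaB_eq_triangle, sum_eq_single_of_mem 0 (mem_range.2 hN) fun u _ hu => by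
      rw [triangle_zero, Pi.single_eq_of_ne hu, zero_mul, zero_mul]]
    simp [triangle_zero, weight]
  | succ i ih =>
    set L := N + j + 1
    calc narayanaB (i + 1 + j) = narayanaB (i + (j + 1)) := by rw [add_right_comm, add_assoc]
      _ = ∑ u ∈ range L, triangle i u * weight u * triangle (j + 1) u := ih _ (by omega)
      _ = ∑ u ∈ range L, ∑ v ∈ range L,
            triangle i u * weight u * (triangle j v * jacobi v u) := by
        refine sum_congr rfl fun u _ => ?_
        rw [triangle_succ j u (N := L) (by omega), mul_sum]
      _ = ∑ v ∈ range L,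
            (∑ u ∈ range L, triangle i u * jacobi u v) * weight v * triangle j v := by
        rw [sum_comm]
        refine sum_congr rfl fun v _ => ?_
        rw [sum_mul, sum_mul]
        refine sum_congr rfl fun u _ => ?_
        linear_combination triangle i u * triangle j v * weight_mul_jacobi u v
      _ = ∑ v ∈ range L, triangle (i + 1) v * weight v * triangle j v := by
        simp_rw [← triangle_succ i _ (by omega : i < L)]
      _ = ∑ v ∈ range N, triangle (i + 1) v * weight v * triangle j v :=
        eventually_constant_sum
          (fun v hv => by rw [triangle_eq_zero (by omega), zero_mul, zero_mul]) (by omega)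

theorem isTotallyPositive_hankel :
    (of fun a b => narayanaB (a + b)).IsTotallyPositive (nonnegCoeffs ℝ) := by
  refine isTotallyPositive_of_forall_rows_lt fun N => ?_
  have hfactor : (of fun a b => narayanaB (a + b)).submatrix (Fin.val : Fin N → ℕ) id
      = (of fun i u => triangle i u * weight u).submatrix Fin.val (Fin.val : Fin N → ℕ)
        * triangleᵀ.submatrix Fin.val id := by
    refine ext fun s t => ?_
    change narayanaB (s + t) = ∑ u : Fin N, triangle s u * weight u * triangle t u
    rw [narayanaB_add_eq_sum s t s.isLt,
      Fin.sum_univ_eq_sum_range (fun u => triangle s u * weight u * triangle t u)]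
  rw [hfactor]
  exact ((isTotallyPositive_triangle.scale_columns weight_mem_nonnegCoeffs).submatrix
    Fin.val_strictMono Fin.val_strictMono).mul
    (isTotallyPositive_triangle.transpose.submatrix Fin.val_strictMono strictMono_id)

end narayanaB

theorem hankel_narayanaB_q_totally_positive_general
    (k : ℕ)
    (i j : Fin k → ℕ) (hi : StrictMono i) (hj : StrictMono j) (m : ℕ) :
    0 ≤ (Matrix.det (Matrix.of fun s t : Fin k => narayanaB (i s + j t))).coeff m :=
  narayanaB.isTotallyPositive_hankel k i j hi hj m

/-- Every minor of the Hankel matrix `H = (W_{i+j}(q))_{i,j ≥ 0}` of type `B`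
Narayana polynomials has nonnegative coefficients. -/
theorem hankel_narayanaB_q_totally_positive
    (k : ℕ) (hk : 1 ≤ k)
    (i j : Fin k → ℕ) (hi : StrictMono i) (hj : StrictMono j) (m : ℕ) :
    0 ≤ (Matrix.det (Matrix.of fun s t : Fin k => narayanaB (i s + j t))).coeff m :=
  hankel_narayanaB_q_totally_positive_general k i j hi hj m
end

section
/- Let e and f be real numbers with f ≥ e ≥ 0, and let (c_{n,k}(q))_{n,k ≥ 0} be defined by c_{0,0}(q) = 1, c_{n,k}(q) = 0 unless n ≥ k ≥ 0, and for n ≥ 1 by c_{n,0}(q) = ((f − e) + e q)·c_{n−1,0}(q) + f q·c_{n−1,1}(q) and, for k ≥ 1, c_{n,k}(q) = c_{n−1,k−1}(q) + (1 + q)·c_{n−1,k}(q) + q·c_{n−1,k+1}(q). Then the Hankel matrix (c_{i+j,0}(q))_{i,j ≥ 0} is q-totally positive: every minor (determinant of a k × k submatrix with strictly increasing row indices and strictly increasing column indices) is a polynomial in q with nonnegative real coefficients. -/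
/-!
The triangle `c` has a tridiagonal production matrix `T`: `c (n + 1) k = ∑ j, c n j * T j k`,
with diagonal `(f - e) + e q, 1 + q, 1 + q, …`, subdiagonal `f q, q, q, …` and superdiagonal
`1, 1, …`. Expanding a minor of a tridiagonal matrix along its first row or column leaves at
most two terms; for `D = (1 + q) D' - q D''` the invariant that `D - q D'` and `D - D'` have
nonnegative coefficients propagates, and the corner splits as
`(f - e) (D' - q D'') + e q (D' - D'')`. So `T` is `q`-totally positive, and by Cauchy–Binet so
is `c`, whose rows `n + 1` are its rows `n` times `T`. Finally the weights `λ k = f q ^ k`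
(`λ 0 = 1`) symmetrize `T`, which gives `c (i + j) 0 = ∑ k, λ k c i k c j k`: the Hankel matrix
is `c Λ cᵀ`, and Cauchy–Binet applies once more.
-/

open Finset

namespace Fin

theorem sum_injective_eq_sum_strictMono_perm {M : Type*} [AddCommMonoid M] {s t : ℕ}
    (F : (Fin s → Fin t) → M) :
    ∑ p ∈ univ.filter Function.Injective, F p =
      ∑ g ∈ univ.filter StrictMono, ∑ σ : Equiv.Perm (Fin s), F (g ∘ σ) := by
  rw [← sum_product']
  refine sum_bij' (fun p _ => (p ∘ Tuple.sort p, (Tuple.sort p)⁻¹))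
    (fun gσ _ => gσ.1 ∘ gσ.2) (fun p hp => ?_) (fun gσ h => ?_) (fun p _ => ?_)
    (fun gσ h => ?_) (fun p _ => ?_)
  · simp only [mem_filter, mem_univ, true_and, mem_product, and_true] at hp ⊢
    exact (Tuple.monotone_sort p).strictMono_of_injective (hp.comp (Tuple.sort p).injective)
  · simp only [mem_filter, mem_univ, true_and, mem_product, and_true] at h ⊢
    exact h.injective.comp gσ.2.injective
  · ext u; simp
  · obtain ⟨g, σ⟩ := gσ
    simp only [mem_filter, mem_univ, true_and, mem_product, and_true] at h
    have hsorted : (g ∘ σ) ∘ Tuple.sort (g ∘ σ) = g := by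
      rw [Tuple.comp_perm_comp_sort_eq_comp_sort, Tuple.sort_eq_refl_iff_monotone.2 h.monotone]
      rfl
    have hperm : σ * Tuple.sort (g ∘ σ) = 1 := by
      ext u
      exact congrArg Fin.val (h.injective (congrFun hsorted u))
    simp only [hsorted, Prod.mk.injEq, true_and]
    rw [eq_inv_of_mul_eq_one_right hperm, inv_inv]
  · simp [Function.comp_assoc]

end Fin

namespace Matrix

variable {R : Type*} [CommRing R] {s t : ℕ}

theorem det_mul_eq_sum_strictMono_s2 (A : Matrix (Fin s) (Fin t) R) (B : Matrix (Fin t) (Fin s) R) :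
    (A * B).det =
      ∑ g ∈ univ.filter StrictMono, (A.submatrix id g).det * (B.submatrix g id).det := by
  have expand :
      (A * B).det = ∑ p : Fin s → Fin t, (∏ u, B (p u) u) * (A.submatrix id p).det := by
    simp only [det_apply', mul_apply, prod_univ_sum, Fintype.piFinset_univ, mul_sum]
    rw [sum_comm]
    refine sum_congr rfl fun p _ => sum_congr rfl fun σ _ => ?_
    simp only [prod_mul_distrib, submatrix_apply, id_eq]
    ring
  have vanish : ∀ p ∈ univ, p ∉ univ.filter Function.Injective →
      (∏ u, B (p u) u) * (A.submatrix id p).det = 0 := by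
    intro p _ hp
    obtain ⟨u, v, huv, hne⟩ : ∃ u v, p u = p v ∧ u ≠ v := by
      simpa [Function.Injective] using hp
    rw [det_zero_of_column_eq hne fun k => by simp [huv], mul_zero]
  rw [expand, ← sum_subset (filter_subset _ _) vanish, Fin.sum_injective_eq_sum_strictMono_perm]
  refine sum_congr rfl fun g _ => ?_
  calc ∑ σ : Equiv.Perm (Fin s), (∏ u, B ((g ∘ σ) u) u) * (A.submatrix id (g ∘ σ)).det
      = ∑ σ : Equiv.Perm (Fin s),
          (A.submatrix id g).det * (Equiv.Perm.sign σ * ∏ u, B (g (σ u)) u) := by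
        refine sum_congr rfl fun σ _ => ?_
        have : A.submatrix id (g ∘ σ) = (A.submatrix id g).submatrix id σ := rfl
        rw [this, det_permute']
        simp only [Function.comp_apply]
        ring
    _ = (A.submatrix id g).det * (B.submatrix g id).det := by
        rw [← mul_sum, det_apply' (B.submatrix g id)]
        rfl

end Matrix

namespace Polynomial

variable (R : Type*) [Semiring R] [PartialOrder R] [IsOrderedRing R]

def nonnegCoeffs_s2 : Subsemiring R[X] where
  carrier := {p | ∀ n, 0 ≤ p.coeff n}
  zero_mem' n := by simp
  one_mem' n := by rw [coeff_one]; split_ifs <;> simp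
  add_mem' hp hq n := by simpa using add_nonneg (hp n) (hq n)
  mul_mem' {p q} hp hq n := by
    rw [coeff_mul]
    exact sum_nonneg fun x _ => mul_nonneg (hp x.1) (hq x.2)

variable {R}

theorem C_mem_nonnegCoeffs {r : R} (hr : 0 ≤ r) : C r ∈ nonnegCoeffs_s2 R := fun n => by
  rw [coeff_C]; split_ifs <;> simp [hr]

theorem X_mem_nonnegCoeffs_s2 : (X : R[X]) ∈ nonnegCoeffs_s2 R := fun n => by
  rw [coeff_X]; split_ifs <;> simp

end Polynomial

namespace TotalPositivity

variable {R : Type*} [CommRing R]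

def minor (T : ℕ → ℕ → R) {n : ℕ} (K L : Fin n → ℕ) : R :=
  (Matrix.of fun u v => T (K u) (L v)).det

def IsTotallyPositive (S : Subsemiring R) (T : ℕ → ℕ → R) : Prop :=
  ∀ ⦃n : ℕ⦄ (K L : Fin n → ℕ), StrictMono K → StrictMono L → minor T K L ∈ S

theorem minor_zero (T : ℕ → ℕ → R) (K L : Fin 0 → ℕ) : minor T K L = 1 :=
  Matrix.det_isEmpty

theorem minor_one (T : ℕ → ℕ → R) (K L : Fin 1 → ℕ) : minor T K L = T (K 0) (L 0) :=
  Matrix.det_fin_one _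

theorem minor_transpose (T : ℕ → ℕ → R) {n : ℕ} (K L : Fin n → ℕ) :
    minor (fun a b => T b a) L K = minor T K L :=
  Matrix.det_transpose _

theorem IsTotallyPositive.apply_mem {S : Subsemiring R} {T : ℕ → ℕ → R}
    (hT : IsTotallyPositive S T) (j k : ℕ) : T j k ∈ S := by
  simpa [minor_one] using hT (n := 1) (fun _ => j) (fun _ => k) (Subsingleton.strictMono _)
    (Subsingleton.strictMono _)

theorem det_mem_of_eq_sum_mul {S : Subsemiring R} {n N : ℕ} (A : Matrix (Fin n) (Fin n) R)
    (P : Fin n → ℕ → R) (Q : ℕ → Fin n → R)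
    (hA : ∀ u v, A u v = ∑ k ∈ range N, P u k * Q k v)
    (hP : ∀ g : Fin n → ℕ, StrictMono g → (Matrix.of fun u v => P u (g v)).det ∈ S)
    (hQ : ∀ g : Fin n → ℕ, StrictMono g → (Matrix.of fun u v => Q (g u) v).det ∈ S) :
    A.det ∈ S := by
  have hfactor :
      A = (Matrix.of fun u (k : Fin N) => P u k) * Matrix.of fun (k : Fin N) v => Q k v := by
    ext u v
    rw [hA, Matrix.mul_apply, ← Fin.sum_univ_eq_sum_range (fun k => P u k * Q k v)]
    rfl
  rw [hfactor, Matrix.det_mul_eq_sum_strictMono_s2]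
  refine sum_mem fun g hg => mul_mem ?_ ?_
  · exact hP (Fin.val ∘ g) (Fin.val_strictMono.comp (mem_filter.1 hg).2)
  · exact hQ (Fin.val ∘ g) (Fin.val_strictMono.comp (mem_filter.1 hg).2)

section Expansion

variable {T : ℕ → ℕ → R} {n : ℕ}

theorem minor_succ_of_row (K L : Fin (n + 1) → ℕ) (h : ∀ v ≠ 0, T (K 0) (L v) = 0) :
    minor T K L = T (K 0) (L 0) * minor T (K ∘ Fin.succ) (L ∘ Fin.succ) := by
  rw [minor, Matrix.det_succ_row_zero, Fin.sum_univ_succ,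
    sum_eq_zero fun v _ => by simp [h v.succ (Fin.succ_ne_zero v)]]
  simp only [Fin.val_zero, pow_zero, one_mul, Fin.succAbove_zero, add_zero]
  rfl

theorem minor_succ_of_col (K L : Fin (n + 1) → ℕ) (h : ∀ u ≠ 0, T (K u) (L 0) = 0) :
    minor T K L = T (K 0) (L 0) * minor T (K ∘ Fin.succ) (L ∘ Fin.succ) := by
  rw [← minor_transpose, minor_succ_of_row L K h, minor_transpose]

theorem minor_succ_succ (K L : Fin (n + 2) → ℕ)
    (hrow : ∀ v : Fin (n + 2), 2 ≤ (v : ℕ) → T (K 0) (L v) = 0)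
    (hcol : ∀ u : Fin (n + 2), 2 ≤ (u : ℕ) → T (K u) (L 0) = 0) :
    minor T K L = T (K 0) (L 0) * minor T (K ∘ Fin.succ) (L ∘ Fin.succ) -
      T (K 0) (L 1) * T (K 1) (L 0) *
        minor T (K ∘ Fin.succ ∘ Fin.succ) (L ∘ Fin.succ ∘ Fin.succ) := by
  have hsecond : minor T (K ∘ Fin.succ) (L ∘ Fin.succAbove 1) =
      T (K 1) (L 0) * minor T (K ∘ Fin.succ ∘ Fin.succ) (L ∘ Fin.succ ∘ Fin.succ) := by
    rw [minor_succ_of_col]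
    · rfl
    · intro u hu
      exact hcol u.succ (by simpa [Fin.val_succ, Nat.one_le_iff_ne_zero] using hu)
  rw [mul_assoc (T (K 0) (L 1)), ← hsecond, minor, Matrix.det_succ_row_zero, Fin.sum_univ_succ,
    Fin.sum_univ_succ, sum_eq_zero fun v _ => by simp [hrow v.succ.succ (by simp [Fin.val_succ])]]
  simp only [Fin.val_zero, pow_zero, one_mul, Fin.succAbove_zero, Fin.succ_zero_eq_one,
    Fin.val_one, pow_one, add_zero]
  show T (K 0) (L 0) * minor T (K ∘ Fin.succ) (L ∘ Fin.succ) +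
    -1 * T (K 0) (L 1) * minor T (K ∘ Fin.succ) (L ∘ Fin.succAbove 1) = _
  ring

end Expansion

def IsTridiagonal (T : ℕ → ℕ → R) : Prop :=
  ∀ j k, j + 2 ≤ k ∨ k + 2 ≤ j → T j k = 0

namespace IsTridiagonal

variable {T : ℕ → ℕ → R} {n : ℕ}

theorem minor_eq_of_ne (hT : IsTridiagonal T) {K L : Fin (n + 1) → ℕ} (hK : StrictMono K)
    (hL : StrictMono L) (h : K 0 ≠ L 0) :
    minor T K L = T (K 0) (L 0) * minor T (K ∘ Fin.succ) (L ∘ Fin.succ) := by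
  rcases h.lt_or_gt with h | h
  · refine minor_succ_of_row K L fun v hv => hT _ _ (.inl ?_)
    have := hL (Fin.pos_of_ne_zero hv)
    omega
  · refine minor_succ_of_col K L fun u hu => hT _ _ (.inr ?_)
    have := hK (Fin.pos_of_ne_zero hu)
    omega

theorem minor_eq_of_eq (hT : IsTridiagonal T) {K L : Fin (n + 2) → ℕ} (hK : StrictMono K)
    (hL : StrictMono L) (h : K 0 = L 0) :
    minor T K L = T (K 0) (K 0) * minor T (K ∘ Fin.succ) (L ∘ Fin.succ) ∨
      K 1 = K 0 + 1 ∧ L 1 = K 0 + 1 ∧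
        minor T K L = T (K 0) (K 0) * minor T (K ∘ Fin.succ) (L ∘ Fin.succ) -
          T (K 0) (K 0 + 1) * T (K 0 + 1) (K 0) *
            minor T (K ∘ Fin.succ ∘ Fin.succ) (L ∘ Fin.succ ∘ Fin.succ) := by
  have hK01 : K 0 < K 1 := hK Fin.zero_lt_one
  have hL01 : L 0 < L 1 := hL Fin.zero_lt_one
  have hK1 : ∀ u ≠ 0, K 1 ≤ K u := fun u hu => hK.monotone (Fin.one_le_of_ne_zero hu)
  have hL1 : ∀ v ≠ 0, L 1 ≤ L v := fun v hv => hL.monotone (Fin.one_le_of_ne_zero hv)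
  have hK2 : ∀ u : Fin (n + 2), 2 ≤ (u : ℕ) → K 1 < K u := fun u hu =>
    hK (Fin.lt_def.2 (by simp; omega))
  have hL2 : ∀ v : Fin (n + 2), 2 ≤ (v : ℕ) → L 1 < L v := fun v hv =>
    hL (Fin.lt_def.2 (by simp; omega))
  by_cases hLsucc : L 1 = K 0 + 1
  · by_cases hKsucc : K 1 = K 0 + 1
    · refine .inr ⟨hKsucc, hLsucc, ?_⟩
      rw [minor_succ_succ K L (fun v hv => hT _ _ (.inl ?_)) (fun u hu => hT _ _ (.inr ?_)),
        ← h, hLsucc, hKsucc]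
      · have := hL2 v hv; omega
      · have := hK2 u hu; omega
    · refine .inl ?_
      rw [minor_succ_of_col K L fun u hu => hT _ _ (.inr ?_), ← h]
      have := hK1 u hu; omega
  · refine .inl ?_
    rw [minor_succ_of_row K L fun v hv => hT _ _ (.inl ?_), ← h]
    have := hL1 v hv; omega

end IsTridiagonal

def MinorsMem (S : Subsemiring R) (T : ℕ → ℕ → R) (n : ℕ) : Prop :=
  ∀ K L : Fin n → ℕ, StrictMono K → StrictMono L → minor T K L ∈ S

def CornerMinorsMem (S : Subsemiring R) (T : ℕ → ℕ → R) (z : R) (n : ℕ) : Prop :=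
  ∀ K L : Fin (n + 1) → ℕ, StrictMono K → StrictMono L → K 0 = L 0 → 0 < K 0 →
    minor T K L - z * minor T (K ∘ Fin.succ) (L ∘ Fin.succ) ∈ S

/-- With `x = q`, `y = 1`, `u = f - e`, `v = e` this is the production matrix of the theorem.
The corner entries are those for which the expansion of a minor at the corner splits as
`u y (D' - x D'') + v x (D' - y D'')`. -/
def stieltjesTridiag (x y u v : R) (j k : ℕ) : R :=
  if j = k then (if k = 0 then u * y + v * x else x + y)
  else if j = k + 1 then (if k = 0 then (u + v) * (x * y) else x * y)
  else if k = j + 1 then 1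
  else 0

namespace stieltjesTridiag

variable {x y u v : R}

theorem isTridiagonal : IsTridiagonal (stieltjesTridiag x y u v) := by
  intro j k h
  unfold stieltjesTridiag
  split_ifs <;> first | rfl | omega

theorem zero_zero : stieltjesTridiag x y u v 0 0 = u * y + v * x := by
  simp [stieltjesTridiag]

theorem succ_succ (a : ℕ) : stieltjesTridiag x y u v (a + 1) (a + 1) = x + y := by
  simp [stieltjesTridiag]

theorem one_zero : stieltjesTridiag x y u v 1 0 = (u + v) * (x * y) := by
  simp [stieltjesTridiag]

theorem succ_succ_succ (a : ℕ) : stieltjesTridiag x y u v (a + 2) (a + 1) = x * y := by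
  rw [stieltjesTridiag, if_neg (by omega), if_pos rfl, if_neg (by omega)]

theorem self_succ (a : ℕ) : stieltjesTridiag x y u v a (a + 1) = 1 := by
  rw [stieltjesTridiag, if_neg (by omega), if_neg (by omega), if_pos rfl]

variable {S : Subsemiring R}

theorem mem (hx : x ∈ S) (hy : y ∈ S) (hu : u ∈ S) (hv : v ∈ S) (j k : ℕ) :
    stieltjesTridiag x y u v j k ∈ S := by
  unfold stieltjesTridiag
  split_ifs
  · exact add_mem (mul_mem hu hy) (mul_mem hv hx)
  · exact add_mem hx hy
  · exact mul_mem (add_mem hu hv) (mul_mem hx hy)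
  · exact mul_mem hx hy
  · exact one_mem S
  · exact zero_mem S

variable {n : ℕ}

theorem cornerMinorsMem {z w : R} (hw : w ∈ S) (hsum : z + w = x + y) (hprod : z * w = x * y)
    (hmin : MinorsMem S (stieltjesTridiag x y u v) n)
    (ih : ∀ m < n, CornerMinorsMem S (stieltjesTridiag x y u v) z m) :
    CornerMinorsMem S (stieltjesTridiag x y u v) z n := by
  intro K L hK hL h hpos
  obtain ⟨a, ha⟩ : ∃ a, K 0 = a + 1 := ⟨K 0 - 1, by omega⟩
  cases n with
  | zero =>
    rw [minor_one, minor_zero, ← h, ha, succ_succ, ← hsum]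
    convert hw using 1
    ring
  | succ m =>
    have hK' := hK.comp Fin.strictMono_succ
    have hL' := hL.comp Fin.strictMono_succ
    have hT : IsTridiagonal (stieltjesTridiag x y u v) := isTridiagonal
    rcases hT.minor_eq_of_eq hK hL h with hD | ⟨hK1, hL1, hD⟩
    · rw [hD, ha, succ_succ, ← hsum]
      convert mul_mem hw (hmin _ _ hK' hL') using 1
      ring
    · rw [hD, ha, succ_succ, self_succ, succ_succ_succ, ← hsum, ← hprod]
      have := ih m m.lt_succ_self _ _ hK' hL' (by simp [hK1, hL1]) (by simp [hK1])
      rw [Function.comp_assoc, Function.comp_assoc] at this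
      convert mul_mem hw this using 1
      ring

theorem minorsMem (hx : x ∈ S) (hy : y ∈ S) (hu : u ∈ S) (hv : v ∈ S)
    (ihmin : ∀ m < n, MinorsMem S (stieltjesTridiag x y u v) m)
    (ihx : ∀ m < n, CornerMinorsMem S (stieltjesTridiag x y u v) x m)
    (ihy : ∀ m < n, CornerMinorsMem S (stieltjesTridiag x y u v) y m) :
    MinorsMem S (stieltjesTridiag x y u v) n := by
  have hT : IsTridiagonal (stieltjesTridiag x y u v) := isTridiagonal
  intro K L hK hL
  cases n with
  | zero => rw [minor_zero]; exact one_mem S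
  | succ m =>
  have hK' := hK.comp Fin.strictMono_succ
  have hL' := hL.comp Fin.strictMono_succ
  have htail := ihmin m m.lt_succ_self _ _ hK' hL'
  by_cases h : K 0 = L 0
  · rcases Nat.eq_zero_or_pos (K 0) with h0 | hpos
    · cases m with
      | zero => rw [minor_one]; exact mem hx hy hu hv _ _
      | succ m =>
      rcases hT.minor_eq_of_eq hK hL h with hD | ⟨hK1, hL1, hD⟩
      · rw [hD]; exact mul_mem (mem hx hy hu hv _ _) htail
      · have hcx := ihx m (by omega) _ _ hK' hL' (by simp [hK1, hL1]) (by simp [hK1])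
        have hcy := ihy m (by omega) _ _ hK' hL' (by simp [hK1, hL1]) (by simp [hK1])
        rw [Function.comp_assoc, Function.comp_assoc] at hcx hcy
        rw [hD, h0, zero_zero, self_succ, one_zero]
        convert add_mem (mul_mem (mul_mem hu hy) hcx) (mul_mem (mul_mem hv hx) hcy) using 1
        ring
    · have hc := ihx m m.lt_succ_self K L hK hL h hpos
      convert add_mem hc (mul_mem hx htail) using 1
      ring
  · rw [hT.minor_eq_of_ne hK hL h]
    exact mul_mem (mem hx hy hu hv _ _) htail

theorem isTotallyPositive (hx : x ∈ S) (hy : y ∈ S) (hu : u ∈ S) (hv : v ∈ S) :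
    IsTotallyPositive S (stieltjesTridiag x y u v) := by
  have key : ∀ n, MinorsMem S (stieltjesTridiag x y u v) n ∧
      CornerMinorsMem S (stieltjesTridiag x y u v) x n ∧
      CornerMinorsMem S (stieltjesTridiag x y u v) y n := by
    intro n
    induction n using Nat.strong_induction_on with
    | _ n ih =>
    have hmin := minorsMem hx hy hu hv (fun m hm => (ih m hm).1) (fun m hm => (ih m hm).2.1)
      (fun m hm => (ih m hm).2.2)
    exact ⟨hmin, cornerMinorsMem hy rfl rfl hmin fun m hm => (ih m hm).2.1,
      cornerMinorsMem hx (add_comm y x) (mul_comm y x) hmin fun m hm => (ih m hm).2.2⟩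
  exact fun n => (key n).1

theorem row_succ_eq_sum_mul {c : ℕ → ℕ → R} (hz : ∀ n k, n < k → c n k = 0)
    (hrec0 : ∀ n, c (n + 1) 0 = (u * y + v * x) * c n 0 + (u + v) * (x * y) * c n 1)
    (hrec : ∀ n k, c (n + 1) (k + 1) = c n k + (x + y) * c n (k + 1) + x * y * c n (k + 2))
    (n k : ℕ) : c (n + 1) k = ∑ j ∈ range (n + 1), c n j * stieltjesTridiag x y u v j k := by
  have hT : IsTridiagonal (stieltjesTridiag x y u v) := isTridiagonal
  rw [← eventually_constant_sum (N := n + 1) (n := n + k + 3)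
      (fun j hj => by rw [hz n j (by omega), zero_mul]) (by omega),
    eventually_constant_sum (N := k + 2) (fun j hj => by rw [hT j k (.inr (by omega)), mul_zero])
      (by omega)]
  cases k with
  | zero =>
    rw [sum_range_succ, sum_range_one, zero_zero, one_zero, hrec0]
    ring
  | succ a =>
    rw [sum_range_succ, sum_range_succ, sum_range_succ,
      sum_eq_zero fun j hj => by rw [hT j (a + 1) (.inl (by simp at hj; omega)), mul_zero],
      self_succ, succ_succ, succ_succ_succ, hrec]
    ring

end stieltjesTridiag

variable {S : Subsemiring R} {T c : ℕ → ℕ → R}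

theorem isTotallyPositive_of_production (hT : IsTotallyPositive S T) (h00 : c 0 0 = 1)
    (hz : ∀ n k, n < k → c n k = 0)
    (hc : ∀ n k, c (n + 1) k = ∑ j ∈ range (n + 1), c n j * T j k) :
    IsTotallyPositive S c := by
  intro n
  induction n with
  | zero => intro I K _ _; rw [minor_zero]; exact one_mem S
  | succ n ih =>
  suffices ∀ a (I K : Fin (n + 1) → ℕ), StrictMono I → StrictMono K → I 0 = a →
      minor c I K ∈ S from fun I K hI hK => this _ I K hI hK rfl
  intro a
  induction a with
  | zero =>
    intro I K hI hK hI0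
    rw [minor_succ_of_row I K fun v hv => hz _ _ (by have := hK (Fin.pos_of_ne_zero hv); omega)]
    refine mul_mem ?_ (ih _ _ (hI.comp Fin.strictMono_succ) (hK.comp Fin.strictMono_succ))
    rcases Nat.eq_zero_or_pos (K 0) with h | h
    · rw [hI0, h, h00]; exact one_mem S
    · rw [hI0, hz 0 _ h]; exact zero_mem S
  | succ a iha =>
    intro I K hI hK hI0
    have hpos : ∀ u, 0 < I u := fun u => by have := hI.monotone (Fin.zero_le u); omega
    have hI' : StrictMono fun u => I u - 1 := fun u v huv => by
      have := hI huv; have := hpos u; show I u - 1 < I v - 1; omega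
    refine det_mem_of_eq_sum_mul (N := I (Fin.last n)) _ (fun u j => c (I u - 1) j)
      (fun j v => T j (K v)) (fun u v => ?_) (fun g hg => iha _ g hI' hg (by simp [hI0]))
      (fun g hg => hT g K hg hK)
    obtain ⟨p, hp⟩ : ∃ p, I u = p + 1 := ⟨I u - 1, by have := hpos u; omega⟩
    have hlast := hI.monotone (Fin.le_last u)
    show c (I u) (K v) = _
    rw [hp, hc, Nat.add_sub_cancel]
    exact (eventually_constant_sum (fun j hj => by rw [hz p j (by omega), zero_mul])
      (by omega)).symm

def weight (T : ℕ → ℕ → R) (k : ℕ) : R := ∏ i ∈ range k, T (i + 1) i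

theorem IsTridiagonal.weight_mul_comm (hT : IsTridiagonal T) (h1 : ∀ k, T k (k + 1) = 1)
    (k l : ℕ) : weight T k * T l k = weight T l * T k l := by
  have key : ∀ k l, k < l → weight T k * T l k = weight T l * T k l := by
    intro k l hkl
    rcases Nat.lt_or_ge (k + 1) l with h | h
    · rw [hT l k (.inr (by omega)), hT k l (.inl (by omega)), mul_zero, mul_zero]
    · obtain rfl : l = k + 1 := by omega
      rw [weight, weight, prod_range_succ, h1, mul_one]
  rcases lt_trichotomy k l with h | rfl | h
  · exact key k l h
  · rfl
  · exact (key l k h).symm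

theorem sum_weight_mul_succ_left {w : ℕ → R} (hsymm : ∀ k l, w k * T l k = w l * T k l)
    (hz : ∀ n k, n < k → c n k = 0)
    (hc : ∀ n k, c (n + 1) k = ∑ j ∈ range (n + 1), c n j * T j k)
    {i j N : ℕ} (hi : i < N) (hj : j < N) :
    ∑ k ∈ range N, w k * c (i + 1) k * c j k =
      ∑ k ∈ range N, w k * c i k * c (j + 1) k := by
  have hext : ∀ n < N, ∀ k, c (n + 1) k = ∑ l ∈ range N, c n l * T l k := fun n hn k => by
    rw [hc, eventually_constant_sum (fun l hl => by rw [hz n l (by omega), zero_mul]) hn]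
  calc ∑ k ∈ range N, w k * c (i + 1) k * c j k
      = ∑ k ∈ range N, ∑ l ∈ range N, c i l * (w k * T l k) * c j k := by
        refine sum_congr rfl fun k _ => ?_
        rw [hext i hi, mul_sum, sum_mul]
        exact sum_congr rfl fun l _ => by ring
    _ = ∑ l ∈ range N, ∑ k ∈ range N, c i l * (w l * T k l) * c j k := by
        rw [sum_comm]
        simp only [hsymm]
    _ = ∑ l ∈ range N, w l * c i l * c (j + 1) l := by
        refine sum_congr rfl fun l _ => ?_
        rw [hext j hj, mul_sum]
        exact sum_congr rfl fun k _ => by ring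

theorem hankel_eq_sum {w : ℕ → R} (hsymm : ∀ k l, w k * T l k = w l * T k l) (hw : w 0 = 1)
    (h00 : c 0 0 = 1) (hz : ∀ n k, n < k → c n k = 0)
    (hc : ∀ n k, c (n + 1) k = ∑ j ∈ range (n + 1), c n j * T j k) (i j N : ℕ)
    (hN : i + j < N) : c (i + j) 0 = ∑ k ∈ range N, w k * c i k * c j k := by
  induction i generalizing j with
  | zero =>
    rw [sum_eq_single 0 (fun k _ hk => by rw [hz 0 k (by omega), mul_zero, zero_mul])
      (fun h => absurd (mem_range.2 (by omega)) h), hw, h00, zero_add, one_mul, one_mul]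
  | succ i ih =>
    rw [sum_weight_mul_succ_left hsymm hz hc (by omega) (by omega), ← ih (j + 1) (by omega),
      Nat.add_right_comm, Nat.add_assoc]

theorem IsTridiagonal.hankel_isTotallyPositive (hT : IsTridiagonal T)
    (h1 : ∀ k, T k (k + 1) = 1) (hTP : IsTotallyPositive S T) (h00 : c 0 0 = 1)
    (hz : ∀ n k, n < k → c n k = 0)
    (hc : ∀ n k, c (n + 1) k = ∑ j ∈ range (n + 1), c n j * T j k) :
    IsTotallyPositive S fun a b => c (a + b) 0 := by
  have hcTP := isTotallyPositive_of_production hTP h00 hz hc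
  intro n I J hI hJ
  refine det_mem_of_eq_sum_mul (N := univ.sup I + univ.sup J + 1) _
    (fun u k => weight T k * c (I u) k) (fun k v => c (J v) k) (fun u v => ?_)
    (fun g hg => ?_) (fun g hg => ?_)
  · have := le_sup (f := I) (mem_univ u)
    have := le_sup (f := J) (mem_univ v)
    exact hankel_eq_sum (hT.weight_mul_comm h1) (by simp [weight]) h00 hz hc _ _ _ (by omega)
  · have hrow : (Matrix.of fun u v => weight T (g v) * c (I u) (g v)).det =
        (∏ v, weight T (g v)) * minor c I g :=
      Matrix.det_mul_row _ _
    rw [hrow]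
    exact mul_mem (prod_mem fun v _ => prod_mem fun i _ => hTP.apply_mem _ _) (hcTP I g hI hg)
  · have := hcTP J g hJ hg
    rwa [← minor_transpose] at this

end TotalPositivity

open TotalPositivity Polynomial in
theorem hankel_q_totally_positive_case1_general
    (e f : ℝ) (he : 0 ≤ e) (hef : e ≤ f)
    (c : ℕ → ℕ → Polynomial ℝ)
    (h00 : c 0 0 = 1)
    (hz : ∀ n k : ℕ, n < k → c n k = 0)
    (hrec0 : ∀ n : ℕ, c (n + 1) 0 =
      (Polynomial.C (f - e) + Polynomial.C e * Polynomial.X) * c n 0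
        + Polynomial.C f * Polynomial.X * c n 1)
    (hrec : ∀ n k : ℕ, c (n + 1) (k + 1) =
      c n k + (1 + Polynomial.X) * c n (k + 1) + Polynomial.X * c n (k + 2))
    (s : ℕ)
    (i j : Fin s → ℕ) (hi : StrictMono i) (hj : StrictMono j) (m : ℕ) :
    0 ≤ (Matrix.det (Matrix.of fun u v : Fin s => c (i u + j v) 0)).coeff m := by
  have hrec0' : ∀ n, c (n + 1) 0 =
      (C (f - e) * 1 + C e * X) * c n 0 + (C (f - e) + C e) * (X * 1) * c n 1 := fun n => by
    rw [hrec0, ← C_add, sub_add_cancel]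
    ring
  have hrec' : ∀ n k, c (n + 1) (k + 1) = c n k + (X + 1) * c n (k + 1) + X * 1 * c n (k + 2) :=
    fun n k => by rw [hrec]; ring
  have hTP := stieltjesTridiag.isTotallyPositive X_mem_nonnegCoeffs_s2 (one_mem _)
    (C_mem_nonnegCoeffs (sub_nonneg.2 hef)) (C_mem_nonnegCoeffs he)
  exact stieltjesTridiag.isTridiagonal.hankel_isTotallyPositive stieltjesTridiag.self_succ hTP
    h00 hz (stieltjesTridiag.row_succ_eq_sum_mul hz hrec0' hrec') i j hi hj m

/-- For real numbers `f ≥ e ≥ 0`, the Hankel matrix `(c_{i+j,0}(q))_{i,j ≥ 0}` of the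
first column of the Catalan–Stieltjes matrix defined by
`c_{n,0} = ((f-e) + e q) c_{n-1,0} + f q c_{n-1,1}` and
`c_{n,k} = c_{n-1,k-1} + (1+q) c_{n-1,k} + q c_{n-1,k+1}` (for `k ≥ 1`)
is `q`-totally positive: every minor has nonnegative coefficients. -/
theorem hankel_q_totally_positive_case1
    (e f : ℝ) (he : 0 ≤ e) (hef : e ≤ f)
    (c : ℕ → ℕ → Polynomial ℝ)
    (h00 : c 0 0 = 1)
    (hz : ∀ n k : ℕ, n < k → c n k = 0)
    (hrec0 : ∀ n : ℕ, c (n + 1) 0 =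
      (Polynomial.C (f - e) + Polynomial.C e * Polynomial.X) * c n 0
        + Polynomial.C f * Polynomial.X * c n 1)
    (hrec : ∀ n k : ℕ, c (n + 1) (k + 1) =
      c n k + (1 + Polynomial.X) * c n (k + 1) + Polynomial.X * c n (k + 2))
    (s : ℕ) (hs : 1 ≤ s)
    (i j : Fin s → ℕ) (hi : StrictMono i) (hj : StrictMono j) (m : ℕ) :
    0 ≤ (Matrix.det (Matrix.of fun u v : Fin s => c (i u + j v) 0)).coeff m :=
  hankel_q_totally_positive_case1_general e f he hef c h00 hz hrec0 hrec s i j hi hj m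
end

section
/- For every n ≥ 0 the matrix identity H_n = B_n · T_n · B_n^t holds, where H_n = (b_{i+j,0}(q))_{0 ≤ i,j ≤ n} is the (n+1) × (n+1) Hankel matrix of the first column of B, B_n = (b_{i,j}(q))_{0 ≤ i,j ≤ n}, B_n^t is the transpose of B_n, and T_n is the (n+1) × (n+1) diagonal matrix with diagonal entries 1, 2q, 2q^2, ..., 2q^n. -/
open Polynomial

/-- The triangular array `B = (b_{n,k}(q))` defined by `b_{0,0} = 1`, `b_{n,k} = 0` for `k > n`,
`b_{n,0} = (1+q) b_{n-1,0} + 2q b_{n-1,1}` and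
`b_{n,k} = b_{n-1,k-1} + (1+q) b_{n-1,k} + q b_{n-1,k+1}` for `k ≥ 1`. -/
noncomputable def bB : ℕ → ℕ → Polynomial ℝ
  | 0, 0 => 1
  | 0, _ + 1 => 0
  | n + 1, 0 => (1 + Polynomial.X) * bB n 0 + 2 * Polynomial.X * bB n 1
  | n + 1, k + 1 => bB n k + (1 + Polynomial.X) * bB n (k + 1) + Polynomial.X * bB n (k + 2)

lemma bB_zero : ∀ n k, n < k → bB n k = 0 := by
  intro n
  induction n with
  | zero =>
    intro k hk
    match k, hk with
    | k + 1, _ => rfl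
  | succ n ih =>
    intro k hk
    match k, hk with
    | k + 1, hk =>
      have h1 : n < k := by omega
      show bB n k + (1 + X) * bB n (k+1) + X * bB n (k+2) = 0
      rw [ih k h1, ih (k+1) (by omega), ih (k+2) (by omega)]
      ring

noncomputable def tq : ℕ → Polynomial ℝ := fun k => if k = 0 then 1 else 2 * Polynomial.X ^ k

lemma tq_zero : tq 0 = 1 := rfl

lemma tq_succ (k : ℕ) : tq (k+1) = 2 * X^(k+1) := if_neg (Nat.succ_ne_zero k)

noncomputable def S (i j N : ℕ) : Polynomial ℝ :=
  ∑ k ∈ Finset.range N, bB i k * tq k * bB j k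

lemma S_symm (i j N : ℕ) : S i j N = S j i N := by
  unfold S
  exact Finset.sum_congr rfl fun k _ => by ring

lemma S_ext (i j N M : ℕ) (hN : i < N) (hM : i < M) : S i j N = S i j M := by
  have key : ∀ P, i < P → S i j P = S i j (i+1) := by
    intro P hP
    unfold S
    refine (Finset.sum_subset (Finset.range_subset_range.2 (by omega)) ?_).symm
    intro k _ hk
    rw [bB_zero i k (by simpa using hk)]
    ring
  rw [key N hN, key M hM]

lemma S_expand (a b M : ℕ) (ha : a < M + 2) :
    S (a+1) b (M+2) =
      (∑ k ∈ Finset.range M, 2 * X^(k+2) * (bB a (k+1) * bB b (k+2) + bB a (k+2) * bB b (k+1)))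
      + (∑ k ∈ Finset.range (M+1), (1+X) * (2*X^(k+1)) * (bB a (k+1) * bB b (k+1)))
      + 2 * X * (bB a 1 * bB b 0 + bB a 0 * bB b 1)
      + (1+X) * (bB a 0 * bB b 0) := by
  unfold S
  rw [Finset.sum_range_succ']
  have h0 : bB (a+1) 0 * tq 0 * bB b 0
      = (1+X) * (bB a 0 * bB b 0) + 2*X*(bB a 1 * bB b 0) := by
    show ((1+X) * bB a 0 + 2*X*bB a 1) * tq 0 * bB b 0 = _
    rw [tq_zero]
    ring
  have h1 : ∀ k, bB (a+1) (k+1) * tq (k+1) * bB b (k+1)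
      = 2*X^(k+1) * (bB a k * bB b (k+1))
        + (1+X) * (2*X^(k+1)) * (bB a (k+1) * bB b (k+1))
        + 2*X^(k+2) * (bB a (k+2) * bB b (k+1)) := by
    intro k
    show (bB a k + (1+X) * bB a (k+1) + X * bB a (k+2)) * tq (k+1) * bB b (k+1) = _
    rw [tq_succ]
    ring
  rw [h0, Finset.sum_congr rfl fun k _ => h1 k]
  rw [Finset.sum_add_distrib, Finset.sum_add_distrib]
  rw [Finset.sum_range_succ' (fun k => 2*X^(k+1) * (bB a k * bB b (k+1))) M]
  rw [Finset.sum_range_succ (fun k => 2*X^(k+2) * (bB a (k+2) * bB b (k+1))) M]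
  rw [bB_zero a (M+2) (by omega)]
  have hsplit : (∑ k ∈ Finset.range M, 2 * X^(k+2) * (bB a (k+1) * bB b (k+2) + bB a (k+2) * bB b (k+1)))
      = (∑ k ∈ Finset.range M, 2*X^(k+1+1) * (bB a (k+1) * bB b (k+1+1)))
        + (∑ k ∈ Finset.range M, 2*X^(k+2) * (bB a (k+2) * bB b (k+1))) := by
    rw [← Finset.sum_add_distrib]
    exact Finset.sum_congr rfl fun k _ => by ring
  rw [hsplit]
  ring

lemma S_shift (i j M : ℕ) (hi : i < M + 2) (hj : j < M + 2) :
    S (i+1) j (M+2) = S i (j+1) (M+2) := by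
  rw [S_expand i j M hi, S_symm, S_expand j i M hj]
  have e1 : ∀ a b : ℕ, (∑ k ∈ Finset.range M, 2 * X^(k+2) * (bB a (k+1) * bB b (k+2) + bB a (k+2) * bB b (k+1)))
      = (∑ k ∈ Finset.range M, 2 * X^(k+2) * (bB b (k+1) * bB a (k+2) + bB b (k+2) * bB a (k+1))) :=
    fun a b => Finset.sum_congr rfl fun k _ => by ring
  have e2 : (∑ k ∈ Finset.range (M+1), (1+X) * (2*X^(k+1)) * (bB i (k+1) * bB j (k+1)))
      = (∑ k ∈ Finset.range (M+1), (1+X) * (2*X^(k+1)) * (bB j (k+1) * bB i (k+1))) :=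
    Finset.sum_congr rfl fun k _ => by ring
  rw [e1 i j, e2]
  ring

lemma S_main : ∀ i j, S i j (i + j + 2) = bB (i + j) 0 := by
  intro i
  induction i with
  | zero =>
    intro j
    unfold S
    rw [Nat.zero_add]
    rw [Finset.sum_eq_single 0]
    · show bB 0 0 * tq 0 * bB j 0 = bB j 0
      rw [tq_zero, show bB 0 0 = 1 from rfl]
      ring
    · intro k _ hk
      match k, hk with
      | k + 1, _ => rw [show bB 0 (k+1) = 0 from rfl]; ring
    · intro h; exact absurd (Finset.mem_range.2 (by omega)) h
  | succ i ih =>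
    intro j
    have h1 : i + 1 + j + 2 = (i + j + 1) + 2 := by omega
    rw [h1, S_shift i j (i+j+1) (by omega) (by omega)]
    have h2 : (i + j + 1) + 2 = i + (j+1) + 2 := by omega
    rw [h2, ih (j+1)]
    congr 1
    omega

/-- Aigner's identity `H_n = B_n · T_n · B_nᵗ`, where `H_n = (b_{i+j,0}(q))_{0 ≤ i,j ≤ n}`,
`B_n = (b_{i,j}(q))_{0 ≤ i,j ≤ n}`, and `T_n` is the diagonal matrix with diagonal
entries `1, 2q, 2q², …, 2qⁿ`. -/
theorem hankel_eq_bB_mul_T_mul_bB_transpose (n : ℕ) :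
    (Matrix.of fun i j : Fin (n + 1) => bB ((i : ℕ) + (j : ℕ)) 0) =
      (Matrix.of fun i j : Fin (n + 1) => bB (i : ℕ) (j : ℕ)) *
      Matrix.diagonal (fun i : Fin (n + 1) =>
        if (i : ℕ) = 0 then 1 else 2 * Polynomial.X ^ (i : ℕ)) *
      Matrix.transpose (Matrix.of fun i j : Fin (n + 1) => bB (i : ℕ) (j : ℕ)) := by
  apply Matrix.ext
  intro i j
  rw [Matrix.mul_apply]
  have hterm : ∀ k : Fin (n+1),
      ((((Matrix.of fun i j : Fin (n + 1) => bB (i : ℕ) (j : ℕ)) *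
        Matrix.diagonal (fun i : Fin (n + 1) =>
          if (i : ℕ) = 0 then 1 else 2 * Polynomial.X ^ (i : ℕ))) :
        Matrix (Fin (n+1)) (Fin (n+1)) (Polynomial ℝ)) i k) *
        ((Matrix.of fun i j : Fin (n + 1) => bB (i : ℕ) (j : ℕ)).transpose k j)
      = bB (i : ℕ) (k : ℕ) * tq (k : ℕ) * bB (j : ℕ) (k : ℕ) := by
    intro k
    rw [Matrix.mul_diagonal, Matrix.transpose_apply]
    rfl
  rw [Finset.sum_congr rfl fun k _ => hterm k]
  have hS : ∑ k : Fin (n+1), bB (i : ℕ) (k : ℕ) * tq (k : ℕ) * bB (j : ℕ) (k : ℕ)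
      = S (i : ℕ) (j : ℕ) (n+1) := by
    rw [S, ← Fin.sum_univ_eq_sum_range (fun k => bB (i : ℕ) k * tq k * bB (j : ℕ) k) (n+1)]
  rw [hS, S_ext _ _ _ ((i:ℕ)+(j:ℕ)+2) i.isLt (by omega), S_main]
  rfl
end

section
/- The sequence of type B Narayana polynomials (W_n(q))_{n ≥ 0} is q-log-convex: for every n ≥ 1, the polynomial W_{n+1}(q)·W_{n−1}(q) − W_n(q)^2 has all coefficients nonnegative. -/
open Polynomial

/-- Auxiliary family: `ncc N k = ∑_j C(N,j) C(N,j+k) q^j`. -/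
noncomputable def ncc (N k : ℕ) : Polynomial ℝ :=
  ∑ j ∈ Finset.range (N + 1),
    Polynomial.C ((Nat.choose N j : ℝ) * (Nat.choose N (j + k) : ℝ)) * Polynomial.X ^ j

lemma coeff_ncc (N k m : ℕ) :
    (ncc N k).coeff m = (Nat.choose N m : ℝ) * (Nat.choose N (m + k) : ℝ) := by
  rw [ncc, Polynomial.finset_sum_coeff]
  simp only [Polynomial.coeff_C_mul, Polynomial.coeff_X_pow, mul_ite, mul_one, mul_zero]
  rw [Finset.sum_ite_eq (Finset.range (N + 1)) m
    (fun j => (Nat.choose N j : ℝ) * (Nat.choose N (j + k) : ℝ))]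
  split_ifs with h
  · rfl
  · have hm : N < m := by
      simpa [Finset.mem_range, Nat.lt_succ_iff, not_le] using h
    simp [Nat.choose_eq_zero_of_lt hm]

/-- Nonnegativity of all coefficients. -/
def NN (p : Polynomial ℝ) : Prop := ∀ m, 0 ≤ p.coeff m

lemma NN.add {p q : Polynomial ℝ} (hp : NN p) (hq : NN q) : NN (p + q) := by
  intro m
  rw [Polynomial.coeff_add]
  exact add_nonneg (hp m) (hq m)

lemma NN.mul {p q : Polynomial ℝ} (hp : NN p) (hq : NN q) : NN (p * q) := by
  intro m
  rw [Polynomial.coeff_mul]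
  exact Finset.sum_nonneg fun x _ => mul_nonneg (hp x.1) (hq x.2)

lemma NN_zero : NN (0 : Polynomial ℝ) := by
  intro m; simp

lemma NN_one : NN (1 : Polynomial ℝ) := by
  intro m
  rw [Polynomial.coeff_one]
  split_ifs <;> norm_num

lemma NN_X : NN (Polynomial.X : Polynomial ℝ) := by
  intro m
  rw [Polynomial.coeff_X]
  split_ifs <;> norm_num

lemma NN_two : NN (2 : Polynomial ℝ) := by
  have h : (2 : Polynomial ℝ) = 1 + 1 := by norm_num
  rw [h]
  exact NN_one.add NN_one

lemma NN_ncc (N k : ℕ) : NN (ncc N k) := by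
  intro m
  rw [coeff_ncc]
  positivity

lemma NN_onepX : NN ((1 : Polynomial ℝ) + Polynomial.X) := NN_one.add NN_X

/-- values of `ncc` at `N = 0`. -/
lemma ncc_zero_zero : ncc 0 0 = 1 := by
  simp [ncc]

lemma ncc_zero_succ (k : ℕ) : ncc 0 (k + 1) = 0 := by
  simp [ncc, Nat.choose_eq_zero_of_lt (Nat.succ_pos k)]

/-- Recurrence at `k = 0`. -/
lemma rec0 (N : ℕ) :
    ncc (N + 1) 0 = (1 + Polynomial.X) * ncc N 0 + 2 * Polynomial.X * ncc N 1 := by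
  ext m
  have expand : (1 + Polynomial.X) * ncc N 0 + 2 * Polynomial.X * ncc N 1
      = ncc N 0 + Polynomial.X * ncc N 0 + (Polynomial.X * ncc N 1
        + Polynomial.X * ncc N 1) := by ring
  rw [expand]
  simp only [Polynomial.coeff_add]
  cases m with
  | zero =>
      simp only [Polynomial.mul_coeff_zero, Polynomial.coeff_X_zero, zero_mul, add_zero,
        coeff_ncc]
      norm_num
  | succ m =>
      simp only [Polynomial.coeff_X_mul, coeff_ncc, Nat.add_zero]
      have hP : Nat.choose (N + 1) (m + 1) = Nat.choose N m + Nat.choose N (m + 1) :=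
        Nat.choose_succ_succ N m
      rw [hP]
      push_cast
      ring

/-- Recurrence at `k = t+1`. -/
lemma recS (N t : ℕ) :
    ncc (N + 1) (t + 1) = ncc N t + (1 + Polynomial.X) * ncc N (t + 1)
      + Polynomial.X * ncc N (t + 2) := by
  ext m
  have expand : ncc N t + (1 + Polynomial.X) * ncc N (t + 1) + Polynomial.X * ncc N (t + 2)
      = ncc N t + (ncc N (t+1) + Polynomial.X * ncc N (t+1)) + Polynomial.X * ncc N (t+2) := by
    ring
  rw [expand]
  simp only [Polynomial.coeff_add]
  cases m with
  | zero =>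
      simp only [Polynomial.mul_coeff_zero, Polynomial.coeff_X_zero, zero_mul, add_zero,
        coeff_ncc, Nat.choose_zero_right, Nat.zero_add]
      have hP : Nat.choose (N + 1) (t + 1) = Nat.choose N t + Nat.choose N (t + 1) :=
        Nat.choose_succ_succ N t
      rw [hP]
      push_cast
      ring
  | succ m =>
      simp only [Polynomial.coeff_X_mul, coeff_ncc]
      have h1 : m + 1 + (t + 1) = (m + t + 1) + 1 := by omega
      have h2 : m + (t + 1) = m + t + 1 := by omega
      have h3 : m + (t + 2) = (m + t + 1) + 1 := by omega
      rw [h1, h2, h3]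
      have hP1 : Nat.choose (N + 1) ((m + t + 1) + 1)
          = Nat.choose N (m + t + 1) + Nat.choose N ((m + t + 1) + 1) :=
        Nat.choose_succ_succ N (m + t + 1)
      have hP2 : Nat.choose (N + 1) (m + 1) = Nat.choose N m + Nat.choose N (m + 1) :=
        Nat.choose_succ_succ N m
      rw [hP1, hP2]
      push_cast
      ring

/-- Cross determinant between consecutive levels. -/
noncomputable def Xd (N h h' : ℕ) : Polynomial ℝ :=
  ncc (N + 1) h * ncc N h' - ncc (N + 1) h' * ncc N h

lemma Xd_self (N h : ℕ) : Xd N h h = 0 := by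
  simp [Xd]

open Polynomial in
lemma idI (N : ℕ) :
    Xd (N + 1) 1 0 = (1 + X * X) * Xd N 1 0 + (X * (1 + X)) * Xd N 2 0
      + (2 * (X * X)) * Xd N 2 1 := by
  unfold Xd
  have hA := recS (N + 1) 0
  have hB := rec0 (N + 1)
  have hC := rec0 N
  have hD := recS N 0
  norm_num at hA hD
  linear_combination
    (ncc (N + 1) 0) * hA
    + (ncc (N + 1) 0 + (1 + X) * ncc (N + 1) 1 + X * ncc (N + 1) 2) * hC
    - (ncc (N + 1) 1) * hB
    - ((1 + X) * ncc (N + 1) 0 + 2 * X * ncc (N + 1) 1) * hD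

open Polynomial in
lemma idII (N e : ℕ) :
    Xd (N + 1) (e + 2) 0 = (1 + X) * Xd N (e + 1) 0 + (2 * X) * Xd N (e + 1) 1
      + ((1 + X) * (1 + X)) * Xd N (e + 2) 0 + (2 * (X * (1 + X))) * Xd N (e + 2) 1
      + (X * (1 + X)) * Xd N (e + 3) 0 + (2 * (X * X)) * Xd N (e + 3) 1 := by
  unfold Xd
  have hA := recS (N + 1) (e + 1)
  have hB := rec0 (N + 1)
  have hC := rec0 N
  have hD := recS N (e + 1)
  rw [(by omega : e + 1 + 1 = e + 2), (by omega : e + 1 + 2 = e + 3)] at hA hD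
  linear_combination
    (ncc (N + 1) 0) * hA
    + (ncc (N + 1) (e + 1) + (1 + X) * ncc (N + 1) (e + 2) + X * ncc (N + 1) (e + 3)) * hC
    - (ncc (N + 1) (e + 2)) * hB
    - ((1 + X) * ncc (N + 1) 0 + 2 * X * ncc (N + 1) 1) * hD

open Polynomial in
lemma idIII (N b : ℕ) :
    Xd (N + 1) (b + 2) (b + 1) = Xd N (b + 1) b + (1 + X) * Xd N (b + 2) b
      + X * Xd N (b + 3) b + (1 + X + X * X) * Xd N (b + 2) (b + 1)
      + (X * (1 + X)) * Xd N (b + 3) (b + 1) + (X * X) * Xd N (b + 3) (b + 2) := by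
  unfold Xd
  have hA := recS (N + 1) (b + 1)
  have hB := recS (N + 1) b
  have hC := recS N b
  have hD := recS N (b + 1)
  rw [(by omega : b + 1 + 1 = b + 2), (by omega : b + 1 + 2 = b + 3)] at hA hD
  linear_combination
    (ncc (N + 1) (b + 1)) * hA
    + (ncc (N + 1) (b + 1) + (1 + X) * ncc (N + 1) (b + 2) + X * ncc (N + 1) (b + 3)) * hC
    - (ncc (N + 1) (b + 2)) * hB
    - (ncc (N + 1) b + (1 + X) * ncc (N + 1) (b + 1) + X * ncc (N + 1) (b + 2)) * hD

open Polynomial in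
lemma idIV (N b e : ℕ) :
    Xd (N + 1) (b + e + 3) (b + 1) = Xd N (b + e + 2) b + (1 + X) * Xd N (b + e + 2) (b + 1)
      + X * Xd N (b + e + 2) (b + 2) + (1 + X) * Xd N (b + e + 3) b
      + ((1 + X) * (1 + X)) * Xd N (b + e + 3) (b + 1) + (X * (1 + X)) * Xd N (b + e + 3) (b + 2)
      + X * Xd N (b + e + 4) b + (X * (1 + X)) * Xd N (b + e + 4) (b + 1)
      + (X * X) * Xd N (b + e + 4) (b + 2) := by
  unfold Xd
  have hA := recS (N + 1) (b + e + 2)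
  have hB := recS (N + 1) b
  have hC := recS N b
  have hD := recS N (b + e + 2)
  rw [(by omega : b + e + 2 + 1 = b + e + 3), (by omega : b + e + 2 + 2 = b + e + 4)] at hA hD
  linear_combination
    (ncc (N + 1) (b + 1)) * hA
    + (ncc (N + 1) (b + e + 2) + (1 + X) * ncc (N + 1) (b + e + 3)
        + X * ncc (N + 1) (b + e + 4)) * hC
    - (ncc (N + 1) (b + e + 3)) * hB
    - (ncc (N + 1) b + (1 + X) * ncc (N + 1) (b + 1) + X * ncc (N + 1) (b + 2)) * hD

/-- Main induction: all cross determinants have nonnegative coefficients. -/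
lemma Xd_nonneg : ∀ N h h', h' ≤ h → NN (Xd N h h') := by
  intro N
  induction N with
  | zero =>
      intro h h' hh
      rcases Nat.eq_or_lt_of_le hh with rfl | hlt
      · rw [Xd_self]; exact NN_zero
      · cases h' with
        | zero =>
            obtain ⟨k, rfl⟩ : ∃ k, h = k + 1 := ⟨h - 1, by omega⟩
            have hz : Xd 0 (k + 1) 0 = ncc 1 (k + 1) := by
              unfold Xd
              rw [ncc_zero_zero, ncc_zero_succ]
              ring
            rw [hz]
            exact NN_ncc 1 (k + 1)
        | succ b =>
            obtain ⟨k, rfl⟩ : ∃ k, h = k + 1 := ⟨h - 1, by omega⟩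
            have hz : Xd 0 (k + 1) (b + 1) = 0 := by
              unfold Xd
              rw [ncc_zero_succ, ncc_zero_succ]
              ring
            rw [hz]
            exact NN_zero
  | succ N ih =>
      intro h h' hh
      rcases Nat.eq_or_lt_of_le hh with rfl | hlt
      · rw [Xd_self]; exact NN_zero
      · cases h' with
        | zero =>
            cases h with
            | zero => omega
            | succ hh1 =>
                cases hh1 with
                | zero =>
                    rw [idI]
                    exact (((NN_one.add (NN_X.mul NN_X)).mul (ih 1 0 (by omega))).add
                      ((NN_X.mul NN_onepX).mul (ih 2 0 (by omega)))).add
                      ((NN_two.mul (NN_X.mul NN_X)).mul (ih 2 1 (by omega)))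
                | succ e =>
                    rw [idII]
                    exact (((((NN_onepX.mul (ih (e+1) 0 (by omega))).add
                      ((NN_two.mul NN_X).mul (ih (e+1) 1 (by omega)))).add
                      ((NN_onepX.mul NN_onepX).mul (ih (e+2) 0 (by omega)))).add
                      ((NN_two.mul (NN_X.mul NN_onepX)).mul (ih (e+2) 1 (by omega)))).add
                      ((NN_X.mul NN_onepX).mul (ih (e+3) 0 (by omega)))).add
                      ((NN_two.mul (NN_X.mul NN_X)).mul (ih (e+3) 1 (by omega)))
        | succ b =>
            obtain ⟨e, rfl⟩ : ∃ e, h = b + 2 + e := ⟨h - (b + 2), by omega⟩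
            cases e with
            | zero =>
                have hidx : b + 2 + 0 = b + 2 := by omega
                rw [hidx, idIII]
                exact ((((((ih (b+1) b (by omega)).add
                  (NN_onepX.mul (ih (b+2) b (by omega)))).add
                  (NN_X.mul (ih (b+3) b (by omega)))).add
                  (((NN_one.add NN_X).add (NN_X.mul NN_X)).mul (ih (b+2) (b+1) (by omega)))).add
                  ((NN_X.mul NN_onepX).mul (ih (b+3) (b+1) (by omega)))).add
                  ((NN_X.mul NN_X).mul (ih (b+3) (b+2) (by omega))))
            | succ e =>
                have hidx : b + 2 + (e + 1) = b + e + 3 := by omega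
                rw [hidx, idIV]
                exact ((((((((ih (b+e+2) b (by omega)).add
                  (NN_onepX.mul (ih (b+e+2) (b+1) (by omega)))).add
                  (NN_X.mul (ih (b+e+2) (b+2) (by omega)))).add
                  (NN_onepX.mul (ih (b+e+3) b (by omega)))).add
                  ((NN_onepX.mul NN_onepX).mul (ih (b+e+3) (b+1) (by omega)))).add
                  ((NN_X.mul NN_onepX).mul (ih (b+e+3) (b+2) (by omega)))).add
                  (NN_X.mul (ih (b+e+4) b (by omega)))).add
                  ((NN_X.mul NN_onepX).mul (ih (b+e+4) (b+1) (by omega)))).add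
                  ((NN_X.mul NN_X).mul (ih (b+e+4) (b+2) (by omega)))

lemma narayanaB_eq_ncc (n : ℕ) : narayanaB n = ncc n 0 := by
  unfold narayanaB ncc
  refine Finset.sum_congr rfl fun k _ => ?_
  rw [Nat.add_zero, ← Polynomial.C_eq_natCast, Polynomial.C_mul]
  ring

/-- The sequence of type `B` Narayana polynomials is `q`-log-convex:
for `n ≥ 1`, all coefficients of `W_{n+1} W_{n-1} - W_n²` are nonnegative. -/
theorem narayanaB_q_log_convex (n : ℕ) (hn : 1 ≤ n) (m : ℕ) :
    0 ≤ (narayanaB (n + 1) * narayanaB (n - 1) - (narayanaB n) ^ 2).coeff m := by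
  obtain ⟨N, rfl⟩ : ∃ N, n = N + 1 := ⟨n - 1, by omega⟩
  have hsub : N + 1 - 1 = N := rfl
  rw [hsub, narayanaB_eq_ncc, narayanaB_eq_ncc, narayanaB_eq_ncc]
  have key : ncc (N + 1 + 1) 0 * ncc N 0 - (ncc (N + 1)) 0 ^ 2
      = 2 * Polynomial.X * Xd N 1 0 := by
    unfold Xd
    linear_combination (ncc N 0) * (rec0 (N + 1)) - (ncc (N + 1) 0) * (rec0 N)
  rw [key]
  exact (NN_two.mul NN_X).mul (Xd_nonneg N 1 0 (by omega)) m
end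

section
/- The sequence of type B Narayana polynomials (W_n(q))_{n ≥ 0} is strongly q-log-convex: for all integers m ≥ n ≥ 1, the polynomial W_{m+1}(q)·W_{n−1}(q) − W_m(q)·W_n(q) has all coefficients nonnegative. -/
open Polynomial

namespace NarayanaAux

/-- `gP j b = ∑_k C(b,k) C(b,k+j) X^k`. -/
noncomputable def gP (j b : ℕ) : Polynomial ℝ :=
  ∑ k ∈ Finset.range (b + 1),
    Polynomial.C ((b.choose k : ℝ) * (b.choose (k + j) : ℝ)) * Polynomial.X ^ k

lemma gP_coeff (j b r : ℕ) :
    (gP j b).coeff r = (b.choose r : ℝ) * (b.choose (r + j) : ℝ) := by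
  unfold gP
  rw [Polynomial.finset_sum_coeff]
  simp only [Polynomial.coeff_C_mul, Polynomial.coeff_X_pow, mul_ite, mul_one, mul_zero]
  rcases le_or_gt r b with h | h
  · rw [Finset.sum_eq_single r]
    · simp
    · intro k _ hk
      rw [if_neg (fun hrk => hk hrk.symm)]
    · intro hr
      exact absurd (Finset.mem_range.mpr (by omega)) hr
  · rw [Finset.sum_eq_zero, Nat.choose_eq_zero_of_lt h]
    · simp
    · intro k hk
      rw [if_neg]
      intro hrk
      rw [Finset.mem_range] at hk
      omega

lemma grec (j b : ℕ) :
    gP (j + 1) (b + 1) = gP j b + (1 + X) * gP (j + 1) b + X * gP (j + 2) b := by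
  have h1 : (1 + X) * gP (j + 1) b = gP (j + 1) b + X * gP (j + 1) b := by ring
  rw [h1]
  ext r
  cases r with
  | zero =>
    simp only [coeff_add, gP_coeff, Polynomial.mul_coeff_zero, Polynomial.coeff_X_zero,
      zero_mul, add_zero, zero_add]
    rw [Nat.choose_zero_right, Nat.choose_zero_right, Nat.choose_succ_succ b j,
      Nat.cast_add]
    ring
  | succ s =>
    simp only [coeff_add, gP_coeff, Polynomial.coeff_X_mul]
    rw [show s + 1 + (j + 1) = (s + j + 1) + 1 from by omega,
        show s + 1 + j = s + j + 1 from by omega,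
        show s + (j + 1) = s + j + 1 from by omega,
        show s + (j + 2) = (s + j + 1) + 1 from by omega,
        Nat.choose_succ_succ b s, Nat.choose_succ_succ b (s + j + 1),
        Nat.cast_add, Nat.cast_add]
    ring

lemma g0rec (b : ℕ) :
    gP 0 (b + 1) = (1 + X) * gP 0 b + 2 * X * gP 1 b := by
  have h1 : (1 + X) * gP 0 b = gP 0 b + X * gP 0 b := by ring
  have h2 : 2 * X * gP 1 b = X * gP 1 b + X * gP 1 b := by ring
  rw [h1, h2]
  ext r
  cases r with
  | zero =>
    simp only [coeff_add, gP_coeff, Polynomial.mul_coeff_zero, Polynomial.coeff_X_zero,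
      zero_mul, add_zero, zero_add]
    simp
  | succ s =>
    simp only [coeff_add, gP_coeff, Polynomial.coeff_X_mul]
    rw [show s + 1 + 0 = s + 1 from by omega, show s + 0 = s from by omega,
        Nat.choose_succ_succ b s, Nat.cast_add]
    ring

/-- `AP k b = gP (k-1) b + X * gP (k+1) b`, with `AP 0 b = 2 X gP 1 b`. -/
noncomputable def AP : ℕ → ℕ → Polynomial ℝ
  | 0, b => 2 * X * gP 1 b
  | k + 1, b => gP k b + X * gP (k + 2) b

lemma A0rec (b : ℕ) :
    AP 0 (b + 1) = (1 + X) * AP 0 b + 2 * X * AP 1 b := by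
  show 2 * X * gP 1 (b + 1) = (1 + X) * (2 * X * gP 1 b) + 2 * X * (gP 0 b + X * gP 2 b)
  have h := grec 0 b
  simp only [Nat.zero_add] at h
  rw [h]
  ring

lemma Arec (k b : ℕ) :
    AP (k + 1) (b + 1) = AP k b + (1 + X) * AP (k + 1) b + X * AP (k + 2) b := by
  cases k with
  | zero =>
    show gP 0 (b + 1) + X * gP 2 (b + 1) =
      2 * X * gP 1 b + (1 + X) * (gP 0 b + X * gP 2 b) + X * (gP 1 b + X * gP 3 b)
    have h := grec 1 b
    norm_num at h
    rw [g0rec b, h]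
    ring
  | succ k =>
    show gP (k + 1) (b + 1) + X * gP (k + 3) (b + 1) =
      (gP k b + X * gP (k + 2) b) + (1 + X) * (gP (k + 1) b + X * gP (k + 3) b) +
        X * (gP (k + 2) b + X * gP (k + 4) b)
    have h1 := grec k b
    have h2 := grec (k + 2) b
    rw [show k + 2 + 1 = k + 3 from by omega, show k + 2 + 2 = k + 4 from by omega] at h2
    rw [h1, h2]
    ring

/-- `muP k l b = AP k b * gP l b - gP k b * AP l b`. -/
noncomputable def muP (k l b : ℕ) : Polynomial ℝ :=
  AP k b * gP l b - gP k b * AP l b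

lemma mu_self (k b : ℕ) : muP k k b = 0 := by
  simp only [muP]
  ring

/-- Coefficientwise-nonnegative polynomials. -/
def Pos (p : Polynomial ℝ) : Prop := ∀ r, 0 ≤ p.coeff r

lemma Pos.add {p q : Polynomial ℝ} (hp : Pos p) (hq : Pos q) : Pos (p + q) := fun r => by
  rw [Polynomial.coeff_add]
  exact add_nonneg (hp r) (hq r)

lemma Pos.mul {p q : Polynomial ℝ} (hp : Pos p) (hq : Pos q) : Pos (p * q) := fun r => by
  rw [Polynomial.coeff_mul]
  exact Finset.sum_nonneg fun x _ => mul_nonneg (hp _) (hq _)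

lemma pos_zero : Pos (0 : Polynomial ℝ) := fun r => by simp

lemma pos_one : Pos (1 : Polynomial ℝ) := fun r => by
  rw [Polynomial.coeff_one]
  split <;> norm_num

lemma pos_X : Pos (X : Polynomial ℝ) := fun r => by
  rw [Polynomial.coeff_X]
  split <;> norm_num

lemma pos_1X : Pos ((1 : Polynomial ℝ) + X) := pos_one.add pos_X

end NarayanaAux
namespace NarayanaAux

lemma I1 (b : ℕ) :
    muP 1 0 (b + 1) =
      muP 1 0 b + X * X * muP 1 0 b + X * (1 + X) * muP 2 0 b
        + X * X * muP 2 1 b + X * X * muP 2 1 b := by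
  have hA := Arec 0 b
  have hg := grec 0 b
  simp only [Nat.zero_add] at hA hg
  simp only [muP]
  rw [hA, hg, A0rec b, g0rec b]
  ring

lemma I2 (d b : ℕ) :
    muP (d + 1 + 1) 0 (b + 1) =
      (1 + X) * muP (d + 1) 0 b + X * muP (d + 1) 1 b + X * muP (d + 1) 1 b
        + (1 + X) * ((1 + X) * muP (d + 1 + 1) 0 b)
        + X * (1 + X) * (muP (d + 1 + 1) 1 b + muP (d + 1 + 1) 1 b)
        + X * (1 + X) * muP (d + 1 + 2) 0 b
        + X * X * (muP (d + 1 + 2) 1 b + muP (d + 1 + 2) 1 b) := by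
  simp only [muP]
  rw [Arec (d + 1) b, grec (d + 1) b, A0rec b, g0rec b]
  ring

lemma I3 (l b : ℕ) :
    muP (l + 1 + 1) (l + 1) (b + 1) =
      muP (l + 1) l b + (1 + X + X * X) * muP (l + 1 + 1) (l + 1) b
        + (1 + X) * muP (l + 1 + 1) l b + X * muP (l + 1 + 2) l b
        + X * (1 + X) * muP (l + 1 + 2) (l + 1) b
        + X * X * muP (l + 1 + 2) (l + 1 + 1) b := by
  simp only [muP]
  rw [Arec (l + 1) b, Arec l b, grec (l + 1) b, grec l b]
  ring

lemma I4 (k l b : ℕ) :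
    muP (k + 1) (l + 1) (b + 1) =
      muP k l b + (1 + X) * muP k (l + 1) b + X * muP k (l + 2) b
        + (1 + X) * muP (k + 1) l b + (1 + X) * ((1 + X) * muP (k + 1) (l + 1) b)
        + X * (1 + X) * muP (k + 1) (l + 2) b
        + X * muP (k + 2) l b + X * (1 + X) * muP (k + 2) (l + 1) b
        + X * X * muP (k + 2) (l + 2) b := by
  simp only [muP]
  rw [Arec k b, Arec l b, grec k b, grec l b]
  ring

lemma g00 : gP 0 0 = 1 := by
  simp [gP]

lemma gS0 (j : ℕ) : gP (j + 1) 0 = 0 := by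
  simp [gP]

lemma mu_one_zero_zero : muP 1 0 0 = 1 := by
  simp [muP, AP, g00, gS0]

lemma mu_big_zero_zero (e : ℕ) : muP (e + 1 + 1) 0 0 = 0 := by
  simp [muP, AP, g00, gS0]

lemma mu_pos_succ_zero (K l : ℕ) : muP (K + 1) (l + 1) 0 = 0 := by
  simp [muP, AP, gS0]

/-- `nuP k a b = AP k a * gP 0 b - gP k a * AP 0 b`. -/
noncomputable def nuP (k a b : ℕ) : Polynomial ℝ :=
  AP k a * gP 0 b - gP k a * AP 0 b

lemma nu_diag (k b : ℕ) : nuP k b b = muP k 0 b := rfl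

lemma nurec0 (a b : ℕ) :
    nuP 0 (a + 1) b = (1 + X) * nuP 0 a b + X * nuP 1 a b + X * nuP 1 a b := by
  simp only [nuP]
  rw [A0rec a, g0rec a]
  ring

lemma nurecS (k a b : ℕ) :
    nuP (k + 1) (a + 1) b = nuP k a b + (1 + X) * nuP (k + 1) a b + X * nuP (k + 2) a b := by
  simp only [nuP]
  rw [Arec k a, grec k a]
  ring

lemma nuP_eq (k a b : ℕ) : nuP k a b = AP k a * gP 0 b - gP k a * AP 0 b := rfl

lemma AP0_eq (b : ℕ) : AP 0 b = 2 * X * gP 1 b := rfl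

attribute [irreducible] muP nuP

lemma pos_1XX : Pos ((1 : Polynomial ℝ) + X + X * X) := pos_1X.add (pos_X.mul pos_X)

lemma mu_pos : ∀ b k l : ℕ, l ≤ k → Pos (muP k l b) := by
  intro b
  induction b with
  | zero =>
    intro k l hlk
    rcases l with _ | l
    · rcases k with _ | _ | e
      · rw [mu_self]; exact pos_zero
      · rw [mu_one_zero_zero]; exact pos_one
      · rw [mu_big_zero_zero]; exact pos_zero
    · rcases k with _ | K
      · omega
      · rw [mu_pos_succ_zero]; exact pos_zero
  | succ b ih =>
    intro k l hlk
    obtain ⟨e, rfl⟩ : ∃ e, k = l + e := ⟨k - l, by omega⟩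
    rcases e with _ | _ | e
    · rw [show l + 0 = l from rfl, mu_self]
      exact pos_zero
    · rcases l with _ | l
      · rw [show 0 + 1 = 1 from rfl, I1 b]
        have h10 := ih 1 0 (by omega)
        have h20 := ih 2 0 (by omega)
        have h21 := ih 2 1 (by omega)
        exact (((h10.add ((pos_X.mul pos_X).mul h10)).add
          ((pos_X.mul pos_1X).mul h20)).add ((pos_X.mul pos_X).mul h21)).add
          ((pos_X.mul pos_X).mul h21)
      · rw [show l + 1 + 1 = l + 1 + 1 from rfl, I3 l b]
        have h1 := ih (l + 1) l (by omega)
        have h2 := ih (l + 1 + 1) (l + 1) (by omega)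
        have h3 := ih (l + 1 + 1) l (by omega)
        have h4 := ih (l + 1 + 2) l (by omega)
        have h5 := ih (l + 1 + 2) (l + 1) (by omega)
        have h6 := ih (l + 1 + 2) (l + 1 + 1) (by omega)
        exact ((((h1.add (pos_1XX.mul h2)).add (pos_1X.mul h3)).add
          (pos_X.mul h4)).add ((pos_X.mul pos_1X).mul h5)).add
          ((pos_X.mul pos_X).mul h6)
    · rcases l with _ | l
      · rw [show 0 + (e + 2) = e + 1 + 1 from by omega, I2 e b]
        have h1 := ih (e + 1) 0 (by omega)
        have h2 := ih (e + 1) 1 (by omega)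
        have h3 := ih (e + 1 + 1) 0 (by omega)
        have h4 := ih (e + 1 + 1) 1 (by omega)
        have h5 := ih (e + 1 + 2) 0 (by omega)
        have h6 := ih (e + 1 + 2) 1 (by omega)
        exact (((((((pos_1X.mul h1).add (pos_X.mul h2)).add (pos_X.mul h2)).add
          (pos_1X.mul (pos_1X.mul h3))).add ((pos_X.mul pos_1X).mul (h4.add h4))).add
          ((pos_X.mul pos_1X).mul h5)).add ((pos_X.mul pos_X).mul (h6.add h6)))
      · rw [show l + 1 + (e + 2) = (l + e + 2) + 1 from by omega, I4 (l + e + 2) l b]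
        have h1 := ih (l + e + 2) l (by omega)
        have h2 := ih (l + e + 2) (l + 1) (by omega)
        have h3 := ih (l + e + 2) (l + 2) (by omega)
        have h4 := ih (l + e + 2 + 1) l (by omega)
        have h5 := ih (l + e + 2 + 1) (l + 1) (by omega)
        have h6 := ih (l + e + 2 + 1) (l + 2) (by omega)
        have h7 := ih (l + e + 2 + 2) l (by omega)
        have h8 := ih (l + e + 2 + 2) (l + 1) (by omega)
        have h9 := ih (l + e + 2 + 2) (l + 2) (by omega)
        exact (((((((h1.add (pos_1X.mul h2)).add (pos_X.mul h3)).add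
          (pos_1X.mul h4)).add (pos_1X.mul (pos_1X.mul h5))).add
          ((pos_X.mul pos_1X).mul h6)).add (pos_X.mul h7)).add
          ((pos_X.mul pos_1X).mul h8)).add ((pos_X.mul pos_X).mul h9)

lemma nu_pos (b : ℕ) : ∀ d k : ℕ, Pos (nuP k (b + d) b) := by
  intro d
  induction d with
  | zero =>
    intro k
    rcases k with _ | K
    · rw [show b + 0 = b from rfl, nu_diag, mu_self]
      exact pos_zero
    · rw [show b + 0 = b from rfl, nu_diag]
      exact mu_pos b (K + 1) 0 (by omega)
  | succ d ih =>
    intro k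
    rw [show b + (d + 1) = (b + d) + 1 from by omega]
    rcases k with _ | K
    · rw [nurec0]
      exact ((pos_1X.mul (ih 0)).add (pos_X.mul (ih 1))).add (pos_X.mul (ih 1))
    · rw [nurecS]
      exact ((ih K).add (pos_1X.mul (ih (K + 1)))).add (pos_X.mul (ih (K + 2)))

end NarayanaAux
namespace NarayanaAux

lemma narayanaB_eq (n : ℕ) : narayanaB n = gP 0 n := by
  unfold narayanaB gP
  apply Finset.sum_congr rfl
  intro k _
  rw [Nat.add_zero, map_mul, map_natCast, pow_two]

end NarayanaAux

open NarayanaAux in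
/-- The sequence of type `B` Narayana polynomials is strongly `q`-log-convex:
for `m ≥ n ≥ 1`, all coefficients of `W_{m+1} W_{n-1} - W_m W_n` are nonnegative. -/
theorem narayanaB_strongly_q_log_convex (m n : ℕ) (hn : 1 ≤ n) (hmn : n ≤ m) (r : ℕ) :
    0 ≤ (narayanaB (m + 1) * narayanaB (n - 1) - narayanaB m * narayanaB n).coeff r := by
  obtain ⟨n', rfl⟩ : ∃ n', n = n' + 1 := ⟨n - 1, by omega⟩
  have key : narayanaB (m + 1) * narayanaB (n' + 1 - 1) - narayanaB m * narayanaB (n' + 1)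
      = nuP 0 m n' := by
    rw [show n' + 1 - 1 = n' from rfl]
    simp only [narayanaB_eq]
    rw [g0rec m, g0rec n', nuP_eq, AP0_eq, AP0_eq]
    ring
  rw [key]
  have h := nu_pos n' (m - n') 0
  rw [show n' + (m - n') = m from by omega] at h
  exact h r
end
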